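/- arXiv:1302.5555 — 11 statements merged into one kernel-verified Lean document; each statement's English description precedes it below -/
import Mathlib

section
/- For every a∈ℝ the function a·b is c-concave and its c-transform equals −a·b−a²/2. Explicitly: for every a∈ℝ and every y∈X, inf_{x∈X}( d(x,y)²/2 − a·b(x) ) = −a·b(y) − a²/2, and consequently for every x∈X, inf_{y∈X}( d(x,y)²/2 + a·b(y) + a²/2 ) = a·b(x). -/
/-!
Along the line, `b` grows at unit speed: a geodesic from `y` towards a far point `γ̄ t` passes
through a point at distance `s` from `y` where `t - d(·, γ̄ t)` has gained `s`, and compactness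
of the sphere turns this into a point `z` with `d(z, y) = |a|` and `b z = b y + a` (for `a < 0`
use the reversed line and `b = -b⁻`). Since `b` is 1-Lipschitz,
`a (b x - b y) ≤ |a| d(x, y) ≤ d(x, y)²/2 + a²/2` for all `x`, and `z` attains equality, which
computes both infima.
-/

open Filter Topology Metric

def IsGeodesicSpace (X : Type*) [PseudoMetricSpace X] : Prop :=
  ∀ x y : X, ∃ γ : ℝ → X, γ 0 = x ∧ γ 1 = y ∧
    ∀ s ∈ Set.Icc (0:ℝ) 1, ∀ t ∈ Set.Icc (0:ℝ) 1, dist (γ s) (γ t) = |s - t| * dist x y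

theorem IsGeodesicSpace.exists_dist_eq_dist_eq_sub {X : Type*} [PseudoMetricSpace X]
    (hX : IsGeodesicSpace X) (y p : X) {s : ℝ} (hs₀ : 0 ≤ s) (hs : s ≤ dist y p) :
    ∃ x : X, dist x y = s ∧ dist x p = dist y p - s := by
  obtain ⟨γ, hγ₀, hγ₁, hγ⟩ := hX y p
  set r := s / dist y p
  have hr : r * dist y p = s := div_mul_cancel_of_imp fun h => by linarith
  have hr_mem : r ∈ Set.Icc (0:ℝ) 1 := ⟨by positivity, div_le_one_of_le₀ hs dist_nonneg⟩
  refine ⟨γ r, ?_, ?_⟩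
  · have h := hγ r hr_mem 0 (by simp)
    rwa [hγ₀, sub_zero, abs_of_nonneg hr_mem.1, hr] at h
  · have h := hγ r hr_mem 1 (by simp)
    rwa [hγ₁, abs_of_nonpos (by linarith [hr_mem.2]), neg_sub, sub_mul, one_mul, hr] at h

theorem mul_sub_le_dist_sq_div_two_add_sq_div_two {X : Type*} [PseudoMetricSpace X] {f : X → ℝ}
    (hf : ∀ u v, f u ≤ f v + dist u v) (a : ℝ) (u v : X) :
    a * (f u - f v) ≤ dist u v ^ 2 / 2 + a ^ 2 / 2 := by
  have hfuv : |f u - f v| ≤ dist u v :=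
    abs_sub_le_iff.2 ⟨by linarith [hf u v], by linarith [hf v u, dist_comm u v]⟩
  calc a * (f u - f v) ≤ |a| * |f u - f v| := abs_mul a _ ▸ le_abs_self _
    _ ≤ |a| * dist u v := mul_le_mul_of_nonneg_left hfuv (abs_nonneg a)
    _ ≤ dist u v ^ 2 / 2 + a ^ 2 / 2 := by nlinarith [sq_nonneg (dist u v - |a|), sq_abs a]

theorem ciInf_eq_of_forall_ge_of_eq {ι α : Type*} [ConditionallyCompleteLattice α] {f : ι → α}
    {a : α} (h : ∀ i, a ≤ f i) (j : ι) (hj : f j = a) : ⨅ i, f i = a :=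
  IsLeast.csInf_eq ⟨⟨j, hj⟩, by rintro _ ⟨i, rfl⟩; exact h i⟩

section Busemann

variable {X : Type*} [PseudoMetricSpace X] {γ : ℝ → X} {f : X → ℝ}

theorem le_add_dist_of_tendsto_sub_dist
    (hf : ∀ x, Tendsto (fun t => t - dist x (γ t)) atTop (𝓝 (f x))) (u v : X) :
    f u ≤ f v + dist u v :=
  le_of_tendsto_of_tendsto' (hf u) ((hf v).add_const _) fun t => by
    linarith [dist_triangle_left v (γ t) u]

theorem sub_dist_le_of_tendsto_sub_dist (hγ : ∀ s t, dist (γ s) (γ t) = |s - t|)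
    (hf : ∀ x, Tendsto (fun t => t - dist x (γ t)) atTop (𝓝 (f x))) (x : X) (t : ℝ) :
    t - dist x (γ t) ≤ f x := by
  refine ge_of_tendsto (hf x) (eventually_atTop.2 ⟨t, fun u hu => ?_⟩)
  have htu : dist (γ t) (γ u) = u - t := by rw [hγ, abs_of_nonpos (by linarith)]; ring
  linarith [dist_triangle x (γ t) (γ u)]

theorem exists_dist_eq_and_eq_add_of_tendsto_sub_dist [ProperSpace X] (hX : IsGeodesicSpace X)
    (hγ : ∀ s t, dist (γ s) (γ t) = |s - t|)
    (hf : ∀ x, Tendsto (fun t => t - dist x (γ t)) atTop (𝓝 (f x))) {s : ℝ} (hs : 0 ≤ s)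
    (y : X) : ∃ z, dist z y = s ∧ f z = f y + s := by
  have near : ∀ t ≥ dist y (γ 0) + s, ∃ x ∈ sphere y s, s + (t - dist y (γ t)) ≤ f x := by
    intro t ht
    have ht₀ : 0 ≤ t := by linarith [dist_nonneg (x := y) (y := γ 0)]
    have h0t : dist (γ 0) (γ t) = t := by rw [hγ, zero_sub, abs_neg, abs_of_nonneg ht₀]
    have hst : s ≤ dist y (γ t) := by linarith [dist_triangle (γ 0) y (γ t), dist_comm y (γ 0)]
    obtain ⟨x, hxy, hxt⟩ := hX.exists_dist_eq_dist_eq_sub y (γ t) hs hst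
    exact ⟨x, hxy, by linarith [sub_dist_le_of_tendsto_sub_dist hγ hf x t]⟩
  have hcont : Continuous f :=
    (LipschitzWith.of_le_add (le_add_dist_of_tendsto_sub_dist hf)).continuous
  obtain ⟨x₀, hx₀, -⟩ := near _ le_rfl
  obtain ⟨z, hz, hmax⟩ := (isCompact_sphere y s).exists_isMaxOn ⟨x₀, hx₀⟩ hcont.continuousOn
  have hge : s + f y ≤ f z := le_of_tendsto ((hf y).const_add s) <|
    eventually_atTop.2 ⟨_, fun t ht => by
      obtain ⟨x, hx, hfx⟩ := near t ht
      exact hfx.trans (hmax hx)⟩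
  refine ⟨z, hz, le_antisymm ?_ (by linarith)⟩
  linarith [le_add_dist_of_tendsto_sub_dist hf z y, mem_sphere.1 hz]

theorem exists_dist_eq_abs_and_eq_add_of_add_eq_zero [ProperSpace X] (hX : IsGeodesicSpace X)
    (hγ : ∀ s t, dist (γ s) (γ t) = |s - t|) {b bminus : X → ℝ}
    (hb : ∀ x, Tendsto (fun t => t - dist x (γ t)) atTop (𝓝 (b x)))
    (hbminus : ∀ x, Tendsto (fun t => t - dist x (γ (-t))) atTop (𝓝 (bminus x)))
    (hsum : ∀ x, b x + bminus x = 0) (a : ℝ) (y : X) :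
    ∃ z, dist z y = |a| ∧ b z = b y + a := by
  rcases le_or_gt 0 a with ha | ha
  · rw [abs_of_nonneg ha]
    exact exists_dist_eq_and_eq_add_of_tendsto_sub_dist hX hγ hb ha y
  · have hγneg : ∀ s t, dist (γ (-s)) (γ (-t)) = |s - t| := fun s t => by
      rw [hγ, neg_sub_neg, abs_sub_comm]
    obtain ⟨z, hzy, hz⟩ :=
      exists_dist_eq_and_eq_add_of_tendsto_sub_dist hX hγneg hbminus (neg_nonneg.2 ha.le) y
    exact ⟨z, by rwa [abs_of_neg ha], by linarith [hsum z, hsum y]⟩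

end Busemann

/-- On a proper geodesic space containing a line whose Busemann functions satisfy
`b⁺ + b⁻ = 0` (with `b := b⁺`), every multiple `a·b` is c-concave with
c-transform `(a·b)^c = -a·b - a²/2`. -/
theorem busemann_multiples_are_kantorovich_potentials
    {X : Type*} [MetricSpace X] [ProperSpace X]
    (hgeo : ∀ x y : X, ∃ γ : ℝ → X, γ 0 = x ∧ γ 1 = y ∧
      ∀ s ∈ Set.Icc (0:ℝ) 1, ∀ t ∈ Set.Icc (0:ℝ) 1,
        dist (γ s) (γ t) = |s - t| * dist x y)
    (γbar : ℝ → X)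
    (hline : ∀ s t : ℝ, dist (γbar s) (γbar t) = |s - t|)
    (b bminus : X → ℝ)
    (hb : ∀ x : X, Tendsto (fun t => t - dist x (γbar t)) atTop (𝓝 (b x)))
    (hbminus : ∀ x : X, Tendsto (fun t => t - dist x (γbar (-t))) atTop (𝓝 (bminus x)))
    (hsum : ∀ x : X, b x + bminus x = 0) :
    (∀ (a : ℝ) (y : X),
      (⨅ x : X, (dist x y ^ 2 / 2 - a * b x)) = -(a * b y) - a ^ 2 / 2) ∧
    (∀ (a : ℝ) (x : X),
      (⨅ y : X, (dist x y ^ 2 / 2 + a * b y + a ^ 2 / 2)) = a * b x) := by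
  have hshift := exists_dist_eq_abs_and_eq_add_of_add_eq_zero hgeo hline hb hbminus hsum
  have hbound := mul_sub_le_dist_sq_div_two_add_sq_div_two (le_add_dist_of_tendsto_sub_dist hb)
  refine ⟨fun a y => ?_, fun a x => ?_⟩
  · obtain ⟨z, hzy, hz⟩ := hshift a y
    refine ciInf_eq_of_forall_ge_of_eq (fun x => by linarith [hbound a x y]) z ?_
    rw [hzy, hz, sq_abs]; ring
  · obtain ⟨z, hzx, hz⟩ := hshift (-a) x
    refine ciInf_eq_of_forall_ge_of_eq (fun y => by linarith [hbound a x y]) z ?_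
    rw [dist_comm, hzx, hz, sq_abs]; ring
end

section
/- For every x∈X, limsup_{y→x, y≠x} |b(y)−b(x)|/d(x,y) = 1; that is, the local Lipschitz constant of the Busemann function b equals 1 at every point of X (note that no point of X is isolated, since X is geodesic and contains a line). -/
/-!
Along the line `γ`, `t - d(x, γ t)` is nondecreasing in `t`, so `b x ≥ t - d(x, γ t)` for every
`t`. Being a pointwise limit of 1-Lipschitz functions, `b` is 1-Lipschitz, which bounds the
difference quotients by `1`. Conversely, choose `T` so large that `T - d(x, γ T)` is within `δ` of
`b x` and `d(x, γ T) ≥ ε`, and let `y` be the point at distance `ε` from `x` on a geodesic from `x`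
to `γ T`. Then `b y ≥ T - d(y, γ T) = T - d(x, γ T) + ε > b x + ε - δ`, so difference quotients
close to `1` occur at every scale.
-/

open Filter Topology

section Busemann

variable {X : Type*} [PseudoMetricSpace X] {γ : ℝ → X}

theorem monotone_sub_dist_of_lipschitzWith_one (hγ : LipschitzWith 1 γ) (x : X) :
    Monotone fun t => t - dist x (γ t) := by
  intro s t hst
  have hγst : dist (γ s) (γ t) ≤ t - s := by
    simpa [Real.dist_eq, abs_of_nonpos (sub_nonpos.2 hst)] using hγ.dist_le_mul s t
  linarith [dist_triangle x (γ s) (γ t)]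

theorem sub_dist_le_of_tendsto (hγ : LipschitzWith 1 γ) {x : X} {β : ℝ}
    (hβ : Tendsto (fun t => t - dist x (γ t)) atTop (𝓝 β)) (t : ℝ) :
    t - dist x (γ t) ≤ β :=
  (monotone_sub_dist_of_lipschitzWith_one hγ x).ge_of_tendsto hβ t

theorem lipschitzWith_one_of_tendsto_sub_dist {b : X → ℝ}
    (hb : ∀ x, Tendsto (fun t => t - dist x (γ t)) atTop (𝓝 (b x))) :
    LipschitzWith 1 b := by
  refine LipschitzWith.of_le_add fun x y => sub_le_iff_le_add'.1 ?_
  refine le_of_tendsto' ((hb x).sub (hb y)) fun t => ?_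
  linarith [dist_triangle_left y (γ t) x]

theorem exists_dist_eq_dist_eq_sub_of_geodesic {x z : X} {σ : ℝ → X} (hσ0 : σ 0 = x)
    (hσ1 : σ 1 = z)
    (hσ : ∀ s ∈ Set.Icc (0 : ℝ) 1, ∀ t ∈ Set.Icc (0 : ℝ) 1, dist (σ s) (σ t) = |s - t| * dist x z)
    {ε : ℝ} (hε : 0 < ε) (hεz : ε ≤ dist x z) :
    ∃ y, dist x y = ε ∧ dist y z = dist x z - ε := by
  have hxz : 0 < dist x z := hε.trans_le hεz
  set s := ε / dist x z
  have hs : s ∈ Set.Icc (0 : ℝ) 1 := ⟨by positivity, (div_le_one hxz).2 hεz⟩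
  have hsε : s * dist x z = ε := div_mul_cancel₀ ε hxz.ne'
  refine ⟨σ s, ?_, ?_⟩
  · have h0s := hσ 0 ⟨le_rfl, zero_le_one⟩ s hs
    rw [hσ0, abs_of_nonpos (by linarith [hs.1])] at h0s
    linarith
  · have hs1 := hσ s hs 1 ⟨zero_le_one, le_rfl⟩
    rw [hσ1, abs_of_nonpos (by linarith [hs.2])] at hs1
    linarith

theorem exists_dist_eq_busemann_sub_ge
    (hgeo : ∀ x y : X, ∃ σ : ℝ → X, σ 0 = x ∧ σ 1 = y ∧
      ∀ s ∈ Set.Icc (0 : ℝ) 1, ∀ t ∈ Set.Icc (0 : ℝ) 1, dist (σ s) (σ t) = |s - t| * dist x y)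
    (hγ : LipschitzWith 1 γ) {b : X → ℝ}
    (hb : ∀ x, Tendsto (fun t => t - dist x (γ t)) atTop (𝓝 (b x)))
    (x : X) {ε δ : ℝ} (hε : 0 < ε) (hδ : 0 < δ) :
    ∃ y, dist x y = ε ∧ ε - δ ≤ b y - b x := by
  have hdist : Tendsto (fun t => dist x (γ t)) atTop atTop :=
    (tendsto_id.atTop_add (hb x).neg).congr fun t => by simp
  obtain ⟨T, hTb, hTε⟩ := (((hb x).eventually (eventually_gt_nhds (sub_lt_self _ hδ))).and
    (hdist.eventually_ge_atTop ε)).exists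
  obtain ⟨σ, hσ0, hσ1, hσ⟩ := hgeo x (γ T)
  obtain ⟨y, hxy, hyT⟩ := exists_dist_eq_dist_eq_sub_of_geodesic hσ0 hσ1 hσ hε hTε
  refine ⟨y, hxy, ?_⟩
  linarith [sub_dist_le_of_tendsto hγ (hb y) T]

theorem LipschitzWith.abs_sub_div_dist_le_one {f : X → ℝ} (hf : LipschitzWith 1 f) (x y : X) :
    |f y - f x| / dist x y ≤ 1 :=
  div_le_one_of_le₀
    (by simpa [Real.dist_eq, dist_comm, abs_sub_comm] using hf.dist_le_mul y x) dist_nonneg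

theorem LipschitzWith.limsup_abs_sub_div_dist_le_one {f : X → ℝ} (hf : LipschitzWith 1 f)
    (x : X) [(𝓝[≠] x).NeBot] : limsup (fun y => |f y - f x| / dist x y) (𝓝[≠] x) ≤ 1 :=
  limsup_le_of_le (isCoboundedUnder_le_of_le _ fun y => by positivity)
    (Eventually.of_forall (hf.abs_sub_div_dist_le_one x))

theorem frequently_le_abs_sub_div_dist {f : X → ℝ} {x : X}
    (hf : ∀ ε > 0, ∀ δ > 0, ∃ y, dist x y = ε ∧ ε - δ ≤ f y - f x) {c : ℝ} (hc : c < 1) :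
    ∃ᶠ y in 𝓝[≠] x, c ≤ |f y - f x| / dist x y := by
  rw [Metric.nhdsWithin_basis_ball.frequently_iff]
  intro r hr
  obtain ⟨y, hxy, hy⟩ := hf (r / 2) (half_pos hr) (r / 2 * (1 - c)) (by nlinarith)
  refine ⟨y, ⟨?_, ?_⟩, ?_⟩
  · rw [Metric.mem_ball, dist_comm, hxy]
    linarith
  · rintro rfl
    simp only [dist_self] at hxy
    linarith
  · rw [hxy, le_div_iff₀ (half_pos hr)]
    linarith [le_abs_self (f y - f x)]

end Busemann

theorem busemann_local_lipschitz_constant_one_general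
    {X : Type*} [MetricSpace X]
    (hgeo : ∀ x y : X, ∃ γ : ℝ → X, γ 0 = x ∧ γ 1 = y ∧
      ∀ s ∈ Set.Icc (0:ℝ) 1, ∀ t ∈ Set.Icc (0:ℝ) 1,
        dist (γ s) (γ t) = |s - t| * dist x y)
    (γbar : ℝ → X)
    (hline : ∀ s t : ℝ, dist (γbar s) (γbar t) = |s - t|)
    (b : X → ℝ)
    (hb : ∀ x : X, Tendsto (fun t => t - dist x (γbar t)) atTop (𝓝 (b x))) :
    ∀ x : X, Filter.limsup (fun y => |b y - b x| / dist x y) (𝓝[≠] x) = 1 := by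
  intro x
  have hγ : LipschitzWith 1 γbar :=
    (Isometry.of_dist_eq fun s t => by rw [hline, Real.dist_eq]).lipschitz
  have hlip : LipschitzWith 1 b := lipschitzWith_one_of_tendsto_sub_dist hb
  have hfreq : ∀ c < 1, ∃ᶠ y in 𝓝[≠] x, c ≤ |b y - b x| / dist x y := fun c hc =>
    frequently_le_abs_sub_div_dist
      (fun ε hε δ hδ => exists_dist_eq_busemann_sub_ge hgeo hγ hb x hε hδ) hc
  have : (𝓝[≠] x).NeBot :=
    (frequently_true_iff_neBot _).1 ((hfreq 0 one_pos).mono fun _ _ => trivial)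
  refine le_antisymm (hlip.limsup_abs_sub_div_dist_le_one x)
    (le_of_forall_lt_imp_le_of_dense fun c hc => ?_)
  exact le_limsup_of_frequently_le (hfreq c hc)
    (isBoundedUnder_of_eventually_le (Eventually.of_forall (hlip.abs_sub_div_dist_le_one x)))

/-- On a proper geodesic space containing a line with `b⁺ + b⁻ = 0` (and `b := b⁺`),
the local Lipschitz constant of the Busemann function `b` equals `1` at every point. -/
theorem busemann_local_lipschitz_constant_one
    {X : Type*} [MetricSpace X] [ProperSpace X]
    (hgeo : ∀ x y : X, ∃ γ : ℝ → X, γ 0 = x ∧ γ 1 = y ∧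
      ∀ s ∈ Set.Icc (0:ℝ) 1, ∀ t ∈ Set.Icc (0:ℝ) 1,
        dist (γ s) (γ t) = |s - t| * dist x y)
    (γbar : ℝ → X)
    (hline : ∀ s t : ℝ, dist (γbar s) (γbar t) = |s - t|)
    (b bminus : X → ℝ)
    (hb : ∀ x : X, Tendsto (fun t => t - dist x (γbar t)) atTop (𝓝 (b x)))
    (hbminus : ∀ x : X, Tendsto (fun t => t - dist x (γbar (-t))) atTop (𝓝 (bminus x)))
    (hsum : ∀ x : X, b x + bminus x = 0) :
    ∀ x : X, Filter.limsup (fun y => |b y - b x| / dist x y) (𝓝[≠] x) = 1 :=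
  busemann_local_lipschitz_constant_one_general hgeo γbar hline b hb
end

section
/- For every x∈X and every a∈ℝ there exists y∈X with d(x,y)=|a| and b(x)−b(y)=a. (In the paper's terminology: the c-superdifferential ∂^c(a·b)(x) is nonempty for every x∈X and a∈ℝ.) -/
/-!
Let `f` be the Busemann function of a ray `γ` and `a ≥ 0`. For large `t`, walk from `x` a distance
`a` along a geodesic towards `γ t`, reaching a point `y` on the sphere of radius `a` about `x` with
`t - dist x (γ t) + a ≤ f y`. Hence the maximum of `f` on that (compact) sphere is at least
`f x + a`, and it is at most `f x + a` because `f` is 1-Lipschitz. For `a < 0` apply this to the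
reversed line, whose Busemann function is `-b`.
-/

open Filter Topology

section Busemann

variable {X : Type*} [PseudoMetricSpace X]

def IsBusemannFunction (γ : ℝ → X) (f : X → ℝ) : Prop :=
  ∀ x, Tendsto (fun t => t - dist x (γ t)) atTop (𝓝 (f x))

theorem exists_dist_eq_and_dist_eq_sub_of_geodesic {x p : X} {a : ℝ}
    (hgeo : ∃ γ : ℝ → X, γ 0 = x ∧ γ 1 = p ∧
      ∀ s ∈ Set.Icc (0:ℝ) 1, ∀ t ∈ Set.Icc (0:ℝ) 1, dist (γ s) (γ t) = |s - t| * dist x p)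
    (ha : 0 ≤ a) (hap : a ≤ dist x p) :
    ∃ y, dist x y = a ∧ dist y p = dist x p - a := by
  obtain ⟨γ, hγ0, hγ1, hγ⟩ := hgeo
  set D := dist x p
  have hs : a / D ∈ Set.Icc (0:ℝ) 1 :=
    ⟨div_nonneg ha dist_nonneg, div_le_one_of_le₀ hap dist_nonneg⟩
  have hsD : a / D * D = a := div_mul_cancel_of_imp fun hD => le_antisymm (hD ▸ hap) ha
  refine ⟨γ (a / D), ?_, ?_⟩
  · rw [← hγ0, hγ 0 (by simp) _ hs, zero_sub, abs_neg, abs_of_nonneg hs.1, hsD]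
  · rw [← hγ1, hγ _ hs 1 (by simp), abs_of_nonpos (by linarith [hs.2]), neg_sub, sub_mul,
      one_mul, hsD]

namespace IsBusemannFunction

variable {γ : ℝ → X} {f : X → ℝ}

theorem le_add_dist (hf : IsBusemannFunction γ f) (z w : X) : f z ≤ f w + dist z w :=
  le_of_tendsto_of_tendsto' (hf z) ((hf w).add_const _) fun t => by
    linarith [dist_triangle_left w (γ t) z]

theorem lipschitzWith (hf : IsBusemannFunction γ f) : LipschitzWith 1 f :=
  LipschitzWith.of_le_add hf.le_add_dist

theorem sub_dist_le (hf : IsBusemannFunction γ f) (hγ : LipschitzWith 1 γ) (z : X) (s : ℝ) :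
    s - dist z (γ s) ≤ f z := by
  refine ge_of_tendsto (hf z) ?_
  filter_upwards [eventually_ge_atTop s] with t hst
  have hγst : dist (γ s) (γ t) ≤ t - s := by
    simpa [Real.dist_eq, abs_of_nonpos (sub_nonpos.2 hst)] using hγ.dist_le_mul s t
  linarith [dist_triangle z (γ s) (γ t)]

theorem eventually_le_dist (hf : IsBusemannFunction γ f) (x : X) (a : ℝ) :
    ∀ᶠ t in atTop, a ≤ dist x (γ t) := by
  filter_upwards [(hf x).eventually (gt_mem_nhds (lt_add_one (f x))),
    eventually_ge_atTop (a + f x + 1)] with t hlt hge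
  linarith

theorem exists_dist_eq_and_eq_add [ProperSpace X]
    (hgeo : ∀ x y : X, ∃ γ : ℝ → X, γ 0 = x ∧ γ 1 = y ∧
      ∀ s ∈ Set.Icc (0:ℝ) 1, ∀ t ∈ Set.Icc (0:ℝ) 1, dist (γ s) (γ t) = |s - t| * dist x y)
    (hf : IsBusemannFunction γ f) (hγ : LipschitzWith 1 γ) (x : X) {a : ℝ} (ha : 0 ≤ a) :
    ∃ y, dist x y = a ∧ f y = f x + a := by
  have happrox : ∀ᶠ t in atTop, ∃ y ∈ Metric.sphere x a, t - dist x (γ t) + a ≤ f y := by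
    filter_upwards [hf.eventually_le_dist x a] with t hat
    obtain ⟨y, hxy, hyt⟩ := exists_dist_eq_and_dist_eq_sub_of_geodesic (hgeo x (γ t)) ha hat
    refine ⟨y, by rwa [Metric.mem_sphere, dist_comm], ?_⟩
    linarith [hf.sub_dist_le hγ y t]
  obtain ⟨-, y₀, hy₀, -⟩ := happrox.exists
  obtain ⟨z, hz, hzmax⟩ := (isCompact_sphere x a).exists_isMaxOn ⟨y₀, hy₀⟩
    hf.lipschitzWith.continuous.continuousOn
  have hxz : dist x z = a := by rwa [dist_comm, ← Metric.mem_sphere]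
  have hlower : f x + a ≤ f z := le_of_tendsto ((hf x).add_const a) <| happrox.mono
    fun t ⟨y, hy, hty⟩ => hty.trans (hzmax hy)
  have hupper : f z ≤ f x + a := by simpa [dist_comm, hxz] using hf.le_add_dist z x
  exact ⟨z, hxz, le_antisymm hupper hlower⟩

end IsBusemannFunction

end Busemann

/-- On a proper geodesic space containing a line with `b⁺ + b⁻ = 0` (and `b := b⁺`),
for every `x` and every `a ∈ ℝ` there is a point `y` with `dist x y = |a|` and
`b x - b y = a`, i.e. the c-superdifferential `∂^c(a·b)(x)` is nonempty. -/
theorem busemann_c_superdifferential_nonempty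
    {X : Type*} [MetricSpace X] [ProperSpace X]
    (hgeo : ∀ x y : X, ∃ γ : ℝ → X, γ 0 = x ∧ γ 1 = y ∧
      ∀ s ∈ Set.Icc (0:ℝ) 1, ∀ t ∈ Set.Icc (0:ℝ) 1,
        dist (γ s) (γ t) = |s - t| * dist x y)
    (γbar : ℝ → X)
    (hline : ∀ s t : ℝ, dist (γbar s) (γbar t) = |s - t|)
    (b bminus : X → ℝ)
    (hb : ∀ x : X, Tendsto (fun t => t - dist x (γbar t)) atTop (𝓝 (b x)))
    (hbminus : ∀ x : X, Tendsto (fun t => t - dist x (γbar (-t))) atTop (𝓝 (bminus x)))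
    (hsum : ∀ x : X, b x + bminus x = 0) :
    ∀ (x : X) (a : ℝ), ∃ y : X, dist x y = |a| ∧ b x - b y = a := by
  intro x a
  have hiso : Isometry γbar := Isometry.of_dist_eq fun s t => by rw [hline, Real.dist_eq]
  rcases le_or_gt a 0 with ha | ha
  · obtain ⟨y, hxy, hy⟩ :=
      IsBusemannFunction.exists_dist_eq_and_eq_add hgeo hb hiso.lipschitz x (neg_nonneg.2 ha)
    exact ⟨y, by rw [hxy, abs_of_nonpos ha], by linarith⟩
  · obtain ⟨y, hxy, hy⟩ := IsBusemannFunction.exists_dist_eq_and_eq_add (γ := fun t => γbar (-t))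
      hgeo hbminus (hiso.comp (IsometryEquiv.neg ℝ).isometry).lipschitz x ha.le
    exact ⟨y, by rw [hxy, abs_of_pos ha], by linarith [hsum x, hsum y]⟩
end

section
/- Assume in addition that (X,d) is geodesic, i.e. any two points x,y∈X are joined by a curve γ:[0,1]→X with γ(0)=x, γ(1)=y and d(γ(s),γ(t))=|s−t|·d(x,y) for all s,t. Then the quotient metric space is geodesic; on representatives: for all x,y∈X there exists a curve γ:[0,1]→X with γ(0)=x, D(γ(1),y)=0 and D(γ(s),γ(t))=|s−t|·D(x,y) for all s,t∈[0,1]. -/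
open Filter Topology

/-!
Choose `t₀` minimising `t ↦ d(x, F_t y)`; it exists because `t ↦ F_t y` is an isometric embedding
of `ℝ`, so this function is continuous and grows like `|t|`. Then `y' := F_t₀ y` is a
representative of the class of `y` with `d(x, y') = D(x, y')`, and a `d`-geodesic from `x` to `y'`
is a `D`-geodesic: `D ≤ d` gives the upper bound on each piece, and the triangle inequality for `D`
along the pieces `[0, s]`, `[s, u]`, `[u, 1]` forces equality.
-/

section Flow

variable {X : Type*} [PseudoMetricSpace X] {F : ℝ → X → X}

/-- The quotient distance `D` on representatives. -/
noncomputable def orbitDist (F : ℝ → X → X) (x y : X) : ℝ :=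
  ⨅ t : ℝ, dist x (F t y)

theorem orbitDist_le (F : ℝ → X → X) (x y : X) (t : ℝ) : orbitDist F x y ≤ dist x (F t y) :=
  ciInf_le ⟨0, by rintro _ ⟨s, rfl⟩; exact dist_nonneg⟩ t

theorem orbitDist_nonneg (F : ℝ → X → X) (x y : X) : 0 ≤ orbitDist F x y :=
  Real.iInf_nonneg fun _ => dist_nonneg

theorem orbitDist_le_dist (hF0 : ∀ x, F 0 x = x) (x y : X) : orbitDist F x y ≤ dist x y := by
  simpa only [hF0] using orbitDist_le F x y 0

theorem orbitDist_comm (hF0 : ∀ x, F 0 x = x) (hgrp : ∀ t s x, F t (F s x) = F (t + s) x)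
    (hiso : ∀ t x y, dist (F t x) (F t y) = dist x y) (x y : X) :
    orbitDist F x y = orbitDist F y x := by
  have key : ∀ a b : X, orbitDist F a b ≤ orbitDist F b a := fun a b =>
    le_ciInf fun t => by
      have h := hiso (-t) b (F t a)
      rw [hgrp, neg_add_cancel, hF0] at h
      rw [← h, dist_comm]
      exact orbitDist_le F a b (-t)
  exact le_antisymm (key x y) (key y x)

theorem orbitDist_triangle (hgrp : ∀ t s x, F t (F s x) = F (t + s) x)
    (hiso : ∀ t x y, dist (F t x) (F t y) = dist x y) (x y z : X) :
    orbitDist F x z ≤ orbitDist F x y + orbitDist F y z :=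
  le_ciInf_add_ciInf fun t s =>
    calc orbitDist F x z ≤ dist x (F (t + s) z) := orbitDist_le F x z (t + s)
      _ ≤ dist x (F t y) + dist (F t y) (F (t + s) z) := dist_triangle _ _ _
      _ = dist x (F t y) + dist y (F s z) := by rw [← hgrp, hiso]

theorem orbitDist_apply_right (hgrp : ∀ t s x, F t (F s x) = F (t + s) x) (x y : X) (s : ℝ) :
    orbitDist F x (F s y) = orbitDist F x y := by
  simp only [orbitDist, hgrp]
  exact (Equiv.addRight s).iInf_comp (g := fun t => dist x (F t y))

theorem isometry_flow (hgrp : ∀ t s x, F t (F s x) = F (t + s) x)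
    (horbit : ∀ x t, dist x (F t x) = |t|) (y : X) : Isometry (F · y) :=
  Isometry.of_dist_eq fun t s => by
    have h : F t y = F (t - s) (F s y) := by rw [hgrp, sub_add_cancel]
    rw [h, dist_comm, horbit, Real.dist_eq]

theorem exists_orbitDist_eq_dist (hgrp : ∀ t s x, F t (F s x) = F (t + s) x)
    (horbit : ∀ x t, dist x (F t x) = |t|) (x y : X) :
    ∃ t₀, orbitDist F x y = dist x (F t₀ y) := by
  have hcont : Continuous fun t => dist x (F t y) :=
    continuous_const.dist (isometry_flow hgrp horbit y).continuous
  have hlow : ∀ t : ℝ, |t| - dist x y ≤ dist x (F t y) := fun t => by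
    have := dist_triangle y x (F t y)
    rw [horbit, dist_comm y x] at this
    linarith
  have hcoercive : Tendsto (fun t => dist x (F t y)) (cocompact ℝ) atTop :=
    tendsto_atTop_mono hlow <| tendsto_atTop_add_const_right _ _ tendsto_norm_cocompact_atTop
  obtain ⟨t₀, ht₀⟩ := hcont.exists_forall_le hcoercive
  exact ⟨t₀, le_antisymm (orbitDist_le F x y t₀) (le_ciInf ht₀)⟩

end Flow

theorem pseudoDist_geodesic_of_le_dist {X : Type*} [PseudoMetricSpace X] {D : X → X → ℝ}
    (hle : ∀ a b, D a b ≤ dist a b) (htri : ∀ a b c, D a c ≤ D a b + D b c)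
    (hcomm : ∀ a b, D a b = D b a) {x y : X} {γ : ℝ → X} (hγ0 : γ 0 = x) (hγ1 : γ 1 = y)
    (hγ : ∀ s ∈ Set.Icc (0:ℝ) 1, ∀ t ∈ Set.Icc (0:ℝ) 1, dist (γ s) (γ t) = |s - t| * dist x y)
    (hxy : D x y = dist x y) :
    ∀ s ∈ Set.Icc (0:ℝ) 1, ∀ u ∈ Set.Icc (0:ℝ) 1, D (γ s) (γ u) = |s - u| * D x y := by
  have hpiece : ∀ s ∈ Set.Icc (0:ℝ) 1, ∀ u ∈ Set.Icc (0:ℝ) 1, s ≤ u →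
      D (γ s) (γ u) ≤ (u - s) * dist x y := fun s hs u hu hsu => by
    rw [← abs_of_nonneg (sub_nonneg.2 hsu), abs_sub_comm, ← hγ s hs u hu]
    exact hle _ _
  have hmono : ∀ s ∈ Set.Icc (0:ℝ) 1, ∀ u ∈ Set.Icc (0:ℝ) 1, s ≤ u →
      D (γ s) (γ u) = (u - s) * D x y := fun s hs u hu hsu => by
    have h0 : (0:ℝ) ∈ Set.Icc (0:ℝ) 1 := ⟨le_rfl, zero_le_one⟩
    have h1 : (1:ℝ) ∈ Set.Icc (0:ℝ) 1 := ⟨zero_le_one, le_rfl⟩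
    have hchain : D x y ≤ D (γ 0) (γ s) + D (γ s) (γ u) + D (γ u) (γ 1) := by
      rw [← hγ0, ← hγ1]
      linarith [htri (γ 0) (γ s) (γ 1), htri (γ s) (γ u) (γ 1)]
    rw [hxy] at hchain ⊢
    linarith [hpiece 0 h0 s hs hs.1, hpiece s hs u hu hsu, hpiece u hu 1 h1 hu.2]
  intro s hs u hu
  rcases le_total s u with hsu | hus
  · rw [hmono s hs u hu hsu, abs_of_nonpos (sub_nonpos.2 hsu), neg_sub]
  · rw [hcomm, hmono u hu s hs hus, abs_of_nonneg (sub_nonneg.2 hus)]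

/-- If moreover `X` is geodesic, the quotient metric space is geodesic: for all
`x, y ∈ X` there is a curve `γ` with `γ 0 = x`, `γ 1` equivalent to `y`, which is a
constant-speed geodesic for the quotient distance `D x y = ⨅ t, dist x (F t y)`. -/
theorem quotient_space_geodesic
    {X : Type*} [MetricSpace X] (F : ℝ → X → X)
    (hF0 : ∀ x : X, F 0 x = x)
    (hgrp : ∀ t s : ℝ, ∀ x : X, F t (F s x) = F (t + s) x)
    (hiso : ∀ t : ℝ, ∀ x y : X, dist (F t x) (F t y) = dist x y)
    (horbit : ∀ x : X, ∀ t : ℝ, dist x (F t x) = |t|)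
    (hgeo : ∀ x y : X, ∃ γ : ℝ → X, γ 0 = x ∧ γ 1 = y ∧
      ∀ s ∈ Set.Icc (0:ℝ) 1, ∀ t ∈ Set.Icc (0:ℝ) 1,
        dist (γ s) (γ t) = |s - t| * dist x y) :
    ∀ x y : X, ∃ γ : ℝ → X, γ 0 = x ∧
      (⨅ t : ℝ, dist (γ 1) (F t y)) = 0 ∧
      ∀ s ∈ Set.Icc (0:ℝ) 1, ∀ u ∈ Set.Icc (0:ℝ) 1,
        (⨅ t : ℝ, dist (γ s) (F t (γ u))) = |s - u| * ⨅ t : ℝ, dist x (F t y) := by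
  intro x y
  obtain ⟨t₀, ht₀⟩ := exists_orbitDist_eq_dist hgrp horbit x y
  have hshift : orbitDist F x (F t₀ y) = orbitDist F x y := orbitDist_apply_right hgrp x y t₀
  obtain ⟨γ, hγ0, hγ1, hγ⟩ := hgeo x (F t₀ y)
  refine ⟨γ, hγ0, ?_, fun s hs u hu => ?_⟩
  · show orbitDist F (γ 1) y = 0
    refine le_antisymm ?_ (orbitDist_nonneg F _ y)
    simpa only [hγ1, dist_self] using orbitDist_le F (F t₀ y) y t₀
  · show orbitDist F (γ s) (γ u) = |s - u| * orbitDist F x y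
    rw [← hshift]
    exact pseudoDist_geodesic_of_le_dist (orbitDist_le_dist hF0) (orbitDist_triangle hgrp hiso)
      (orbitDist_comm hF0 hgrp hiso) hγ0 hγ1 hγ (hshift.trans ht₀) s hs u hu
end

section
/- Let A⊆X be a Borel set invariant under the flow, i.e. F_t⁻¹(A)=A for every t∈ℝ, and assume m(A∩b⁻¹([0,1)))<∞. Then for every Borel set I⊆ℝ one has m(A∩b⁻¹(I)) = m(A∩b⁻¹([0,1)))·λ(I). (This expresses that the pushforward of m under x↦(π(x),b(x)) is the product of the quotient measure m' with one-dimensional Lebesgue measure, i.e. the flow of the Busemann function splits the measure as a product.) -/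
open MeasureTheory

/-! Push `m|_A` forward by `b`. Since `F t` preserves `m` and `A`, and moves `b` by `-t`, the
resulting measure on `ℝ` is translation invariant; it is finite on `[0,1)`, hence on compacts, so
by uniqueness of Haar measure it is a multiple of Lebesgue measure, the factor being its mass
on `[0,1)`. -/

theorem Real.eq_smul_volume_of_isAddLeftInvariant (μ : Measure ℝ) [μ.IsAddLeftInvariant]
    (h : μ (Set.Ico 0 1) ≠ ⊤) : μ = μ (Set.Ico 0 1) • volume := by
  have : IsFiniteMeasureOnCompacts μ :=
    ⟨fun _ hK => measure_lt_top_of_isCompact_of_isAddLeftInvariant'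
      (by simp [interior_Ico]) h hK⟩
  have hμ := Measure.isAddLeftInvariant_eq_smul μ volume
  have hc : μ (Set.Ico 0 1) = Measure.addHaarScalarFactor μ volume := by
    conv_lhs => rw [hμ]
    simp
  rw [hc]
  exact hμ

theorem Measure.isAddLeftInvariant_map_restrict_of_flow {X : Type*} [MeasurableSpace X]
    {m : Measure X} {F : ℝ → X → X} {b : X → ℝ} {A : Set X}
    (hpres : ∀ t : ℝ, ∀ B : Set X, MeasurableSet B → m (F t ⁻¹' B) = m B)
    (hbmeas : Measurable b) (hb : ∀ (x : X) (t : ℝ), b (F t x) = b x - t)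
    (hA : MeasurableSet A) (hinv : ∀ t : ℝ, F t ⁻¹' A = A) :
    ((m.restrict A).map b).IsAddLeftInvariant := by
  refine ⟨fun t => Measure.ext fun I hI => ?_⟩
  have hshift : b ⁻¹' ((t + ·) ⁻¹' I) ∩ A = F (-t) ⁻¹' (b ⁻¹' I ∩ A) := by
    ext x
    have hxA : F (-t) x ∈ A ↔ x ∈ A := Set.ext_iff.mp (hinv (-t)) x
    simp [hxA, hb, add_comm]
  rw [Measure.map_apply (measurable_const_add t) hI,
    Measure.map_apply hbmeas (measurable_const_add t hI), Measure.map_apply hbmeas hI,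
    Measure.restrict_apply (hbmeas (measurable_const_add t hI)),
    Measure.restrict_apply (hbmeas hI), hshift, hpres (-t) _ (hbmeas hI |>.inter hA)]

theorem measure_splits_along_busemann_flow_general
    {X : Type*}
    [MeasurableSpace X] (m : Measure X)
    (F : ℝ → X → X)
    (hpres : ∀ t : ℝ, ∀ B : Set X, MeasurableSet B → m (F t ⁻¹' B) = m B)
    (b : X → ℝ) (hbmeas : Measurable b)
    (hb : ∀ (x : X) (t : ℝ), b (F t x) = b x - t)
    (A : Set X) (hA : MeasurableSet A)
    (hinv : ∀ t : ℝ, F t ⁻¹' A = A)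
    (hfin : m (A ∩ b ⁻¹' Set.Ico (0:ℝ) 1) < ⊤) :
    ∀ I : Set ℝ, MeasurableSet I →
      m (A ∩ b ⁻¹' I) = m (A ∩ b ⁻¹' Set.Ico (0:ℝ) 1) * volume I := by
  set μ : Measure ℝ := (m.restrict A).map b
  have hμ : ∀ J : Set ℝ, MeasurableSet J → μ J = m (A ∩ b ⁻¹' J) := fun J hJ => by
    rw [Measure.map_apply hbmeas hJ, Measure.restrict_apply (hbmeas hJ), Set.inter_comm]
  have : μ.IsAddLeftInvariant :=
    Measure.isAddLeftInvariant_map_restrict_of_flow hpres hbmeas hb hA hinv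
  have hsplit := Real.eq_smul_volume_of_isAddLeftInvariant μ
    (by rw [hμ _ measurableSet_Ico]; exact hfin.ne)
  intro I hI
  rw [← hμ I hI, ← hμ _ measurableSet_Ico]
  conv_lhs => rw [hsplit]
  rfl

/-- If `F` is a measure-preserving flow on a separable metric measure space and `b`
satisfies `b (F t x) = b x - t`, then for any flow-invariant Borel set `A` with
`m(A ∩ b⁻¹[0,1)) < ∞` one has `m(A ∩ b⁻¹(I)) = m(A ∩ b⁻¹[0,1)) · λ(I)` for every
Borel `I ⊆ ℝ`: the measure splits as a product along the flow of the Busemann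
function. -/
theorem measure_splits_along_busemann_flow
    {X : Type*} [MetricSpace X] [TopologicalSpace.SeparableSpace X]
    [MeasurableSpace X] [BorelSpace X] (m : Measure X)
    (F : ℝ → X → X) (hFmeas : ∀ t : ℝ, Measurable (F t))
    (hF0 : ∀ x : X, F 0 x = x)
    (hgrp : ∀ t s : ℝ, ∀ x : X, F t (F s x) = F (t + s) x)
    (hpres : ∀ t : ℝ, ∀ B : Set X, MeasurableSet B → m (F t ⁻¹' B) = m B)
    (b : X → ℝ) (hbmeas : Measurable b)
    (hb : ∀ (x : X) (t : ℝ), b (F t x) = b x - t)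
    (A : Set X) (hA : MeasurableSet A)
    (hinv : ∀ t : ℝ, F t ⁻¹' A = A)
    (hfin : m (A ∩ b ⁻¹' Set.Ico (0:ℝ) 1) < ⊤) :
    ∀ I : Set ℝ, MeasurableSet I →
      m (A ∩ b ⁻¹' I) = m (A ∩ b ⁻¹' Set.Ico (0:ℝ) 1) * volume I :=
  measure_splits_along_busemann_flow_general m F hpres b hbmeas hb A hA hinv hfin
end

section
/- Let N≥2 be a real number, t∈[0,1], and a,b,c>0 real numbers. Assume that for every pair of positive rationals α,β one has (c/((1−t)·α+t·β))^{−1/N} ≥ (1−t)·(a/α)^{−1/N} + t·(b/β)^{−1/N}. Then c^{−1/(N−1)} ≥ (1−t)·a^{−1/(N−1)} + t·b^{−1/(N−1)}. -/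
/-!
Choose `α = a ^ p`, `β = b ^ p` with `p = -1/(N-1)`: this is legitimate because both sides of the
hypothesis are continuous in `(α, β)` and rational pairs are dense. For this choice
`(a/α)^(-1/N) = α` and `(b/β)^(-1/N) = β`, so with `S = (1-t) a^p + t b^p` the hypothesis reads
`S ≤ (c/S)^(-1/N)`, i.e. `S^((N-1)/N) ≤ c^(-1/N)`, which is the claim raised to the power `(N-1)/N`.
-/

open Filter Topology Real

theorem le_of_forall_pos_rat_of_continuousAt {F G : ℝ × ℝ → ℝ} {x : ℝ × ℝ}
    (hx₁ : 0 < x.1) (hx₂ : 0 < x.2) (hF : ContinuousAt F x) (hG : ContinuousAt G x)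
    (h : ∀ α β : ℚ, 0 < α → 0 < β → F (α, β) ≤ G (α, β)) : F x ≤ G x := by
  by_contra! hlt
  have hdense : DenseRange fun q : ℚ × ℚ => ((q.1 : ℝ), (q.2 : ℝ)) :=
    Rat.denseRange_cast.prodMap Rat.denseRange_cast
  have hpos : ∀ᶠ y in 𝓝 x, 0 < y.1 ∧ 0 < y.2 :=
    (continuousAt_const.eventually_lt continuousAt_fst hx₁).and
      (continuousAt_const.eventually_lt continuousAt_snd hx₂)
  obtain ⟨y, ⟨⟨α, β⟩, rfl⟩, hlt', hα, hβ⟩ :=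
    (mem_closure_iff_frequently.1 (hdense.closure_eq ▸ Set.mem_univ x)).and_eventually
      ((hG.eventually_lt hF hlt).and hpos) |>.exists
  exact (h α β (Rat.cast_pos.mp hα) (Rat.cast_pos.mp hβ)).not_gt hlt'

theorem le_rpow_neg_one_div_sub_one_of_le_div_rpow {N S c : ℝ} (hN : 1 < N) (hS : 0 < S)
    (hc : 0 < c) (h : S ≤ (c / S) ^ (-(1 / N))) : S ≤ c ^ (-(1 / (N - 1))) := by
  have hN0 : 0 < N := by linarith
  have hN1 : 0 < N - 1 := by linarith
  have hpow : S ^ N ≤ S / c := by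
    calc S ^ N ≤ ((c / S) ^ (-(1 / N))) ^ N := by gcongr
      _ = S / c := by
        rw [← rpow_mul (by positivity), show -(1 / N) * N = -1 by field_simp, rpow_neg_one,
          inv_div]
  have hpow' : S ^ (N - 1) ≤ c⁻¹ := by
    rw [rpow_sub_one hS.ne', div_le_iff₀ hS, ← div_eq_inv_mul]
    exact hpow
  calc S = (S ^ (N - 1)) ^ (1 / (N - 1)) := by
        rw [← rpow_mul hS.le, mul_one_div_cancel hN1.ne', rpow_one]
    _ ≤ (c⁻¹) ^ (1 / (N - 1)) := by gcongr
    _ = c ^ (-(1 / (N - 1))) := by rw [rpow_neg hc.le, inv_rpow hc.le]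

theorem div_rpow_self_rpow {x p q : ℝ} (hx : 0 < x) (hpq : (1 - p) * q = p) :
    (x / x ^ p) ^ q = x ^ p := by
  conv_rhs => rw [← hpq, rpow_mul hx.le, rpow_sub hx, rpow_one]

/-- The elementary inequality used for dimension reduction: if for all positive
rationals `α, β` one has
`(c/((1-t)α+tβ))^{-1/N} ≥ (1-t)(a/α)^{-1/N} + t(b/β)^{-1/N}`,
then `c^{-1/(N-1)} ≥ (1-t)a^{-1/(N-1)} + t b^{-1/(N-1)}`. -/
theorem dimension_reduction_inequality
    (N : ℝ) (hN : 2 ≤ N) (t : ℝ) (ht : t ∈ Set.Icc (0:ℝ) 1)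
    (a b c : ℝ) (ha : 0 < a) (hb : 0 < b) (hc : 0 < c)
    (h : ∀ α β : ℚ, 0 < α → 0 < β →
      (1 - t) * (a / (α : ℝ)) ^ (-(1 / N)) + t * (b / (β : ℝ)) ^ (-(1 / N)) ≤
        (c / ((1 - t) * (α : ℝ) + t * (β : ℝ))) ^ (-(1 / N))) :
    (1 - t) * a ^ (-(1 / (N - 1))) + t * b ^ (-(1 / (N - 1))) ≤
      c ^ (-(1 / (N - 1))) := by
  obtain ⟨ht0, ht1⟩ := ht
  set p := -(1 / (N - 1)) with hp
  have hpN : (1 - p) * -(1 / N) = p := by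
    rw [hp]
    field_simp [show N - 1 ≠ 0 by linarith, show N ≠ 0 by linarith]
    ring
  have hap : 0 < a ^ p := rpow_pos_of_pos ha p
  have hbp : 0 < b ^ p := rpow_pos_of_pos hb p
  have hS : 0 < (1 - t) * a ^ p + t * b ^ p := by
    rcases ht0.eq_or_lt with rfl | ht0
    · simpa using hap
    · positivity
  have hF : ContinuousAt (fun x : ℝ × ℝ =>
      (1 - t) * (a / x.1) ^ (-(1 / N)) + t * (b / x.2) ^ (-(1 / N))) (a ^ p, b ^ p) :=
    (((continuousAt_const.div continuousAt_fst hap.ne').rpow_const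
        (.inl (div_pos ha hap).ne')).const_mul _).add
      (((continuousAt_const.div continuousAt_snd hbp.ne').rpow_const
        (.inl (div_pos hb hbp).ne')).const_mul _)
  have hG : ContinuousAt (fun x : ℝ × ℝ =>
      (c / ((1 - t) * x.1 + t * x.2)) ^ (-(1 / N))) (a ^ p, b ^ p) :=
    (continuousAt_const.div ((continuousAt_fst.const_mul _).add (continuousAt_snd.const_mul _))
      hS.ne').rpow_const (.inl (div_pos hc hS).ne')
  have key : (1 - t) * (a / a ^ p) ^ (-(1 / N)) + t * (b / b ^ p) ^ (-(1 / N)) ≤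
      (c / ((1 - t) * a ^ p + t * b ^ p)) ^ (-(1 / N)) :=
    le_of_forall_pos_rat_of_continuousAt hap hbp hF hG h
  rw [div_rpow_self_rpow ha hpN, div_rpow_self_rpow hb hpN] at key
  exact le_rpow_neg_one_div_sub_one_of_le_div_rpow (by linarith) hS hc key
end

section
/- Let (X,d) be a metric space, f:X→ℝ a bounded function, and t>0. Define the Hopf–Lax evolution Q_tf(x):=inf_{y∈X}( f(y) + d(x,y)²/(2t) ). Then Q_tf:X→ℝ is Lipschitz with Lipschitz constant at most 2·√((sup_X f − inf_X f)/t). -/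
/-!
Write `D = sup f - inf f` and `δ = d(x, x')`. Since `Q_t f ≤ f`, only points `y` with
`d(x, y)² ≤ 2tD` compete in the infimum defining `Q_t f (x)`; for those, the triangle
inequality gives `Q_t f (x') ≤ f y + d(x, y)² / 2t + (2 d(x, y) δ + δ²) / 2t`. With
`s = √(D / t)` we have `2tD ≤ ((3/2) t s)²`, so this bounds `Q_t f (x') - Q_t f (x)` by
`(3/2) s δ + δ² / 2t`, which is at most `2 s δ` when `δ ≤ t s`; when `δ > t s` the trivial bound `D = t s²` already suffices.
-/

open Set

noncomputable section

namespace HopfLax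

variable {X : Type*} [PseudoMetricSpace X] {f : X → ℝ} {t : ℝ}

def hopfLax (f : X → ℝ) (t : ℝ) (x : X) : ℝ :=
  ⨅ y, f y + dist x y ^ 2 / (2 * t)

lemma bddBelow_range_add_dist_sq (hf : BddBelow (range f)) (ht : 0 ≤ t) (x : X) :
    BddBelow (range fun y => f y + dist x y ^ 2 / (2 * t)) := by
  obtain ⟨m, hm⟩ := hf
  refine ⟨m, forall_mem_range.2 fun y => ?_⟩
  have hfy : m ≤ f y := hm (mem_range_self y)
  have : 0 ≤ dist x y ^ 2 / (2 * t) := by positivity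
  linarith

lemma hopfLax_le (hf : BddBelow (range f)) (ht : 0 ≤ t) (x y : X) :
    hopfLax f t x ≤ f y + dist x y ^ 2 / (2 * t) :=
  ciInf_le (bddBelow_range_add_dist_sq hf ht x) y

lemma hopfLax_le_self (hf : BddBelow (range f)) (ht : 0 ≤ t) (x : X) : hopfLax f t x ≤ f x := by
  simpa using hopfLax_le hf ht x x

lemma hopfLax_le_iSup (hfa : BddAbove (range f)) (hfb : BddBelow (range f)) (ht : 0 ≤ t)
    (x : X) : hopfLax f t x ≤ ⨆ z, f z :=
  (hopfLax_le_self hfb ht x).trans (le_ciSup hfa x)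

lemma iInf_le_hopfLax [Nonempty X] (hf : BddBelow (range f)) (ht : 0 ≤ t) (x : X) :
    ⨅ z, f z ≤ hopfLax f t x :=
  le_ciInf fun y => by
    have : 0 ≤ dist x y ^ 2 / (2 * t) := by positivity
    linarith [ciInf_le hf y]

lemma hopfLax_sub_hopfLax_le [Nonempty X] (hfa : BddAbove (range f)) (hfb : BddBelow (range f))
    (ht : 0 ≤ t) (x x' : X) :
    hopfLax f t x' - hopfLax f t x ≤ (⨆ z, f z) - ⨅ z, f z := by
  linarith [hopfLax_le_iSup hfa hfb ht x', iInf_le_hopfLax hfb ht x]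

/-- `r` is any radius such that the ball `B(x, r)` contains every point
competing in the infimum defining `hopfLax f t x`. -/
lemma hopfLax_le_add_of_sq_le [Nonempty X] (hfa : BddAbove (range f))
    (hfb : BddBelow (range f)) (ht : 0 < t) {r : ℝ} (hr₀ : 0 ≤ r)
    (hr : 2 * t * ((⨆ z, f z) - ⨅ z, f z) ≤ r ^ 2) (x x' : X) :
    hopfLax f t x' ≤ hopfLax f t x + (2 * r * dist x x' + dist x x' ^ 2) / (2 * t) := by
  set c := (2 * r * dist x x' + dist x x' ^ 2) / (2 * t)
  have hc : 0 ≤ c := by positivity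
  suffices hopfLax f t x' - c ≤ hopfLax f t x by linarith
  refine le_ciInf fun y => ?_
  rcases le_or_gt (dist x y) r with hnear | hfar
  · have htri : dist x' y ≤ dist x x' + dist x y := dist_triangle_left x' y x
    have hsq : dist x' y ^ 2 ≤ dist x y ^ 2 + (2 * r * dist x x' + dist x x' ^ 2) := by
      nlinarith [dist_nonneg (x := x') (y := y), dist_nonneg (x := x) (y := x')]
    calc hopfLax f t x' - c ≤ f y + dist x' y ^ 2 / (2 * t) - c := by
          gcongr; exact hopfLax_le hfb ht.le x' y
      _ ≤ f y + (dist x y ^ 2 + (2 * r * dist x x' + dist x x' ^ 2)) / (2 * t) - c := by gcongr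
      _ = f y + dist x y ^ 2 / (2 * t) := by ring
  · have hosc : (⨆ z, f z) - ⨅ z, f z < dist x y ^ 2 / (2 * t) := by
      rw [lt_div_iff₀ (by positivity)]
      nlinarith
    linarith [hopfLax_le_iSup hfa hfb ht.le x', ciInf_le hfb y]

lemma hopfLax_sub_hopfLax_le_two_sqrt_mul_dist [Nonempty X] (hfa : BddAbove (range f))
    (hfb : BddBelow (range f)) (ht : 0 < t) (x x' : X) :
    hopfLax f t x' - hopfLax f t x ≤ 2 * √(((⨆ z, f z) - ⨅ z, f z) / t) * dist x x' := by
  set D := (⨆ z, f z) - ⨅ z, f z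
  set s := √(D / t)
  set δ := dist x x'
  obtain ⟨x₀⟩ := ‹Nonempty X›
  have hD : 0 ≤ D := sub_nonneg.2 ((ciInf_le hfb x₀).trans (le_ciSup hfa x₀))
  have hs : 0 ≤ s := Real.sqrt_nonneg _
  have hD_eq : D = t * s ^ 2 := by
    rw [Real.sq_sqrt (div_nonneg hD ht.le)]; field_simp
  have hδ : 0 ≤ δ := dist_nonneg
  rcases le_or_gt δ (t * s) with hsmall | hlarge
  · have hr : 2 * t * D ≤ (3 / 2 * t * s) ^ 2 := by rw [hD_eq]; nlinarith
    have hQ := hopfLax_le_add_of_sq_le hfa hfb ht (by positivity) hr x x'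
    calc hopfLax f t x' - hopfLax f t x ≤ (2 * (3 / 2 * t * s) * δ + δ ^ 2) / (2 * t) := by
          linarith
      _ ≤ 2 * s * δ := by rw [div_le_iff₀ (by positivity)]; nlinarith
  · calc hopfLax f t x' - hopfLax f t x ≤ D := hopfLax_sub_hopfLax_le hfa hfb ht.le x x'
      _ = t * s * s := by rw [hD_eq]; ring
      _ ≤ 2 * s * δ := by nlinarith

end HopfLax

open HopfLax in
/-- Lipschitz estimate for the Hopf–Lax evolution: for bounded `f : X → ℝ` and `t > 0`,
the function `Q_t f (x) = ⨅ y, (f y + dist x y² / (2t))` is Lipschitz with constant at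
most `2 √((sup f − inf f)/t)`. -/
theorem hopfLax_lipschitz
    {X : Type*} [MetricSpace X] [Nonempty X]
    (f : X → ℝ) (hfa : BddAbove (Set.range f)) (hfb : BddBelow (Set.range f))
    (t : ℝ) (ht : 0 < t) :
    ∀ x x' : X,
      |(⨅ y : X, (f y + dist x y ^ 2 / (2 * t))) -
          ⨅ y : X, (f y + dist x' y ^ 2 / (2 * t))| ≤
        2 * Real.sqrt (((⨆ z : X, f z) - ⨅ z : X, f z) / t) * dist x x' := by
  intro x x'
  have h := hopfLax_sub_hopfLax_le_two_sqrt_mul_dist hfa hfb ht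
  rw [abs_sub_le_iff]
  exact ⟨dist_comm x' x ▸ h x' x, h x x'⟩
end
end

section
/- For every natural number n and every C₁>0 there exists a constant C, depending only on n, N and C₁, such that the following holds: for every t>0 and every Borel function ρ:X→[0,∞) satisfying ρ(y) ≤ C₁·m(B_{√t}(x))⁻¹·exp(−d(x,y)²/(5t)) for all y∈X, one has ∫_X d(x,y)^n · ρ(y) dm(y) ≤ C·t^{n/2}. (This is the moment estimate for the heat kernel used in the paper.) -/
/-!
Cut `X` into the annuli `A_k = {k√t ≤ d(x,·) < (k+1)√t}`. On `A_k` the integrand is at most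
`((k+1)√t)^n · C₁ e^{-k²/5} / m(B_{√t}(x))`, while Bishop–Gromov (`s(cv) ≤ c^{N-1} s(v)` for
`c ≥ 1`, integrated) gives `m(A_k) ≤ (k+1)^N m(B_{√t}(x))`. The factor `m(B_{√t}(x))` cancels,
and the Gaussian factor makes `∑ (k+1)^{n+N} e^{-k²/5}` converge, leaving `C · t^{n/2}`.
-/

open MeasureTheory Metric Set Real

section BishopGromov

variable {N : ℝ} {s : ℝ → ℝ}

lemma le_rpow_mul_of_antitoneOn_div_rpow (hs : AntitoneOn (fun r => s r / r ^ (N - 1)) (Ioi 0))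
    {v c : ℝ} (hv : 0 < v) (hc : 1 ≤ c) :
    s (c * v) ≤ c ^ (N - 1) * s v := by
  have hc0 : 0 < c := one_pos.trans_le hc
  have hvc : v ≤ c * v := le_mul_of_one_le_left hv.le hc
  have h := hs hv (hv.trans_le hvc) hvc
  dsimp only at h
  have hvN : 0 < v ^ (N - 1) := rpow_pos_of_pos hv _
  rw [mul_rpow hc0.le hv.le, div_le_div_iff₀ (by positivity) hvN] at h
  exact le_of_mul_le_mul_right (h.trans_eq (by ring)) hvN

lemma integral_Ioo_zero_mul (f : ℝ → ℝ) {c r : ℝ} (hc : 0 ≤ c) (hr : 0 ≤ r) :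
    ∫ u in Ioo 0 (c * r), f u = c * ∫ v in Ioo 0 r, f (c * v) := by
  have h_interval : ∀ a, 0 ≤ a → ∀ g : ℝ → ℝ, ∫ u in Ioo 0 a, g u = ∫ u in (0)..a, g u :=
    fun a ha g => by rw [intervalIntegral.integral_of_le ha, integral_Ioc_eq_integral_Ioo]
  have h := intervalIntegral.smul_integral_comp_mul_left (a := 0) (b := r) f c
  rw [mul_zero, smul_eq_mul] at h
  rw [h_interval _ (mul_nonneg hc hr), h_interval _ hr, h]

theorem integral_Ioo_mul_le_rpow_mul (hs : AntitoneOn (fun r => s r / r ^ (N - 1)) (Ioi 0))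
    {r c : ℝ} (hr : 0 < r) (hc : 1 ≤ c) (hint : IntegrableOn s (Ioo 0 (c * r))) :
    ∫ u in Ioo 0 (c * r), s u ≤ c ^ N * ∫ u in Ioo 0 r, s u := by
  have hc0 : 0 < c := one_pos.trans_le hc
  have hint_r : IntegrableOn s (Ioo 0 r) :=
    hint.mono_set (Ioo_subset_Ioo_right (le_mul_of_one_le_left hr.le hc))
  have hint_comp : IntegrableOn (fun v => s (c * v)) (Ioo 0 r) := by
    have h := ((intervalIntegrable_iff_integrableOn_Ioo_of_le (by positivity)).2 hint).comp_mul_left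
      (c := c)
    rw [zero_div, mul_div_cancel_left₀ _ hc0.ne'] at h
    exact (intervalIntegrable_iff_integrableOn_Ioo_of_le hr.le).1 h
  calc ∫ u in Ioo 0 (c * r), s u = c * ∫ v in Ioo 0 r, s (c * v) :=
        integral_Ioo_zero_mul s hc0.le hr.le
    _ ≤ c * ∫ v in Ioo 0 r, c ^ (N - 1) * s v := by
        refine mul_le_mul_of_nonneg_left ?_ hc0.le
        exact setIntegral_mono_on hint_comp (hint_r.const_mul _) measurableSet_Ioo
          fun v hv => le_rpow_mul_of_antitoneOn_div_rpow hs hv.1 hc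
    _ = c ^ N * ∫ u in Ioo 0 r, s u := by
        rw [integral_const_mul, rpow_sub_one hc0.ne']
        field_simp

theorem measure_ball_mul_le_rpow_mul {X : Type*} [PseudoMetricSpace X] [MeasurableSpace X]
    {m : Measure X} {x : X}
    (hvol : ∀ r, 0 < r → m (ball x r) = ENNReal.ofReal (∫ u in Ioo 0 r, s u))
    (hs : AntitoneOn (fun r => s r / r ^ (N - 1)) (Ioi 0)) {r c : ℝ} (hr : 0 < r) (hc : 1 ≤ c)
    (hpos : m (ball x (c * r)) ≠ 0) :
    m (ball x (c * r)) ≤ ENNReal.ofReal (c ^ N) * m (ball x r) := by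
  have hcr : 0 < c * r := mul_pos (one_pos.trans_le hc) hr
  have hint : IntegrableOn s (Ioo 0 (c * r)) := by
    by_contra h
    exact hpos (by rw [hvol _ hcr, integral_undef h, ENNReal.ofReal_zero])
  rw [hvol _ hcr, hvol _ hr, ← ENNReal.ofReal_mul (by positivity)]
  exact ENNReal.ofReal_le_ofReal (integral_Ioo_mul_le_rpow_mul hs hr hc hint)

end BishopGromov

section GaussianMoment

lemma summable_succ_pow_mul_geometric {r : ℝ} (hr0 : 0 < r) (hr1 : r < 1) (M : ℕ) :
    Summable fun k : ℕ => ((k : ℝ) + 1) ^ M * r ^ k := by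
  have h_geom := summable_pow_mul_geometric_of_norm_lt_one M (by rwa [norm_of_nonneg hr0.le])
  have h : Summable fun k : ℕ => ((k + 1 : ℕ) : ℝ) ^ M * r ^ (k + 1) :=
    (summable_nat_add_iff 1).2 h_geom
  refine (h.mul_left r⁻¹).congr fun k => ?_
  push_cast
  field_simp
  ring

noncomputable def gaussianMomentConstant (n : ℕ) (N : ℝ) : ℝ :=
  ∑' k : ℕ, ((k : ℝ) + 1) ^ (n + ⌈N⌉₊) * exp (-1 / 5) ^ k

lemma summable_gaussianMomentConstant (n : ℕ) (N : ℝ) :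
    Summable fun k : ℕ => ((k : ℝ) + 1) ^ (n + ⌈N⌉₊) * exp (-1 / 5) ^ k :=
  summable_succ_pow_mul_geometric (exp_pos _) (exp_lt_one_iff.2 (by norm_num)) _

lemma gaussianMomentConstant_pos (n : ℕ) (N : ℝ) : 0 < gaussianMomentConstant n N :=
  (summable_gaussianMomentConstant n N).tsum_pos (fun _ => by positivity) 0 (by simp)

lemma succ_pow_mul_rpow_mul_exp_le (n : ℕ) (N : ℝ) (k : ℕ) :
    ((k : ℝ) + 1) ^ n * (((k : ℝ) + 1) ^ N * exp (-(k : ℝ) ^ 2 / 5)) ≤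
      ((k : ℝ) + 1) ^ (n + ⌈N⌉₊) * exp (-1 / 5) ^ k := by
  have hk1 : (1 : ℝ) ≤ k + 1 := by linarith [k.cast_nonneg (α := ℝ)]
  have h_pow : ((k : ℝ) + 1) ^ N ≤ ((k : ℝ) + 1) ^ ⌈N⌉₊ := by
    rw [← rpow_natCast]
    exact rpow_le_rpow_of_exponent_le hk1 (Nat.le_ceil N)
  have h_exp : exp (-(k : ℝ) ^ 2 / 5) ≤ exp (-1 / 5) ^ k := by
    rw [← exp_nat_mul, exp_le_exp]
    have hk : (k : ℝ) ≤ (k : ℝ) ^ 2 := by exact_mod_cast Nat.le_self_pow two_ne_zero k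
    linarith
  rw [pow_add, mul_assoc]
  gcongr

lemma exp_neg_sq_div_le_of_mul_sqrt_le {d k t : ℝ} (ht : 0 < t) (hk : 0 ≤ k) (hd : k * √t ≤ d) :
    exp (-d ^ 2 / (5 * t)) ≤ exp (-k ^ 2 / 5) := by
  have h_sq : k ^ 2 * t ≤ d ^ 2 := by
    calc k ^ 2 * t = (k * √t) ^ 2 := by rw [mul_pow, sq_sqrt ht.le]
      _ ≤ d ^ 2 := pow_le_pow_left₀ (by positivity) hd 2
  rw [exp_le_exp, neg_div, neg_div, neg_le_neg_iff, div_le_div_iff₀ (by norm_num) (by positivity)]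
  linarith

lemma iUnion_ball_succ_mul_diff_ball_mul {X : Type*} [PseudoMetricSpace X] (x : X) {σ : ℝ}
    (hσ : 0 < σ) : ⋃ k : ℕ, ball x ((k + 1) * σ) \ ball x (k * σ) = univ := by
  refine eq_univ_of_forall fun y => mem_iUnion.2 ⟨⌊dist y x / σ⌋₊, ?_, ?_⟩
  · rw [mem_ball, ← div_lt_iff₀ hσ]
    exact Nat.lt_floor_add_one _
  · rw [mem_ball, not_lt, ← le_div_iff₀ hσ]
    exact Nat.floor_le (by positivity)

variable {X : Type*} [PseudoMetricSpace X] [MeasurableSpace X] {m : Measure X} {x : X}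

lemma lintegral_le_tsum_setLIntegral_annulus {σ : ℝ} (hσ : 0 < σ) (f : X → ENNReal) :
    ∫⁻ y, f y ∂m ≤ ∑' k : ℕ, ∫⁻ y in ball x ((k + 1) * σ) \ ball x (k * σ), f y ∂m := by
  calc ∫⁻ y, f y ∂m = ∫⁻ y in ⋃ k : ℕ, ball x ((k + 1) * σ) \ ball x (k * σ), f y ∂m := by
        rw [iUnion_ball_succ_mul_diff_ball_mul x hσ, Measure.restrict_univ]
    _ ≤ _ := lintegral_iUnion_le _ _

variable [OpensMeasurableSpace X] {N C₁ t : ℝ} {ρ : X → ℝ} (n : ℕ) (hC₁ : 0 ≤ C₁) (ht : 0 < t)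
  (hfin : m (ball x √t) ≠ ⊤)
  (hdoubling : ∀ c : ℝ, 1 ≤ c → m (ball x (c * √t)) ≤ ENNReal.ofReal (c ^ N) * m (ball x √t))
  (hρ : ∀ y, ρ y ≤ C₁ / (m (ball x √t)).toReal * exp (-dist x y ^ 2 / (5 * t)))
include hC₁ ht hfin hdoubling hρ

lemma setLIntegral_annulus_dist_pow_mul_le (k : ℕ) :
    ∫⁻ y in ball x ((k + 1) * √t) \ ball x (k * √t), ENNReal.ofReal (dist x y ^ n * ρ y) ∂m ≤
      ENNReal.ofReal (C₁ * √t ^ n * (((k : ℝ) + 1) ^ (n + ⌈N⌉₊) * exp (-1 / 5) ^ k)) := by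
  set V := (m (ball x √t)).toReal
  set R := ((k : ℝ) + 1) * √t
  set D := R ^ n * (C₁ / V * exp (-(k : ℝ) ^ 2 / 5))
  have hk1 : (1 : ℝ) ≤ k + 1 := by linarith [k.cast_nonneg (α := ℝ)]
  have hB : 0 ≤ C₁ / V * exp (-(k : ℝ) ^ 2 / 5) :=
    mul_nonneg (div_nonneg hC₁ ENNReal.toReal_nonneg) (exp_pos _).le
  have h_pointwise : ∀ y ∈ ball x R \ ball x (k * √t),
      ENNReal.ofReal (dist x y ^ n * ρ y) ≤ ENNReal.ofReal D := by
    rintro y ⟨hy_in, hy_out⟩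
    rw [mem_ball, dist_comm] at hy_in
    rw [mem_ball, not_lt, dist_comm] at hy_out
    have h_bound : ρ y ≤ C₁ / V * exp (-(k : ℝ) ^ 2 / 5) :=
      (hρ y).trans (mul_le_mul_of_nonneg_left
        (exp_neg_sq_div_le_of_mul_sqrt_le ht k.cast_nonneg hy_out)
        (div_nonneg hC₁ ENNReal.toReal_nonneg))
    refine ENNReal.ofReal_le_ofReal ?_
    calc dist x y ^ n * ρ y ≤ dist x y ^ n * (C₁ / V * exp (-(k : ℝ) ^ 2 / 5)) :=
          mul_le_mul_of_nonneg_left h_bound (by positivity)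
      _ ≤ D := mul_le_mul_of_nonneg_right (pow_le_pow_left₀ dist_nonneg hy_in.le n) hB
  have h_cancel : C₁ / V * V ≤ C₁ := by
    by_cases hV : V = 0
    · simp [hV, hC₁]
    · rw [div_mul_cancel₀ _ hV]
  calc ∫⁻ y in ball x R \ ball x (k * √t), ENNReal.ofReal (dist x y ^ n * ρ y) ∂m
      ≤ ∫⁻ _ in ball x R \ ball x (k * √t), ENNReal.ofReal D ∂m :=
        setLIntegral_mono' (measurableSet_ball.diff measurableSet_ball) h_pointwise
    _ = ENNReal.ofReal D * m (ball x R \ ball x (k * √t)) := setLIntegral_const _ _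
    _ ≤ ENNReal.ofReal D * (ENNReal.ofReal (((k : ℝ) + 1) ^ N) * m (ball x √t)) := by
        gcongr
        exact (measure_mono sdiff_subset).trans (hdoubling _ hk1)
    _ = ENNReal.ofReal (√t ^ n * (C₁ / V * V) *
          (((k : ℝ) + 1) ^ n * (((k : ℝ) + 1) ^ N * exp (-(k : ℝ) ^ 2 / 5)))) := by
        rw [← ENNReal.ofReal_toReal hfin]
        change ENNReal.ofReal D * (ENNReal.ofReal (((k : ℝ) + 1) ^ N) * ENNReal.ofReal V) = _
        rw [← ENNReal.ofReal_mul (by positivity), ← ENNReal.ofReal_mul (by positivity)]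
        congr 1
        simp only [D, R, mul_pow]
        ring
    _ ≤ ENNReal.ofReal (C₁ * √t ^ n * (((k : ℝ) + 1) ^ (n + ⌈N⌉₊) * exp (-1 / 5) ^ k)) := by
        refine ENNReal.ofReal_le_ofReal ?_
        rw [mul_comm C₁]
        exact mul_le_mul (mul_le_mul_of_nonneg_left h_cancel (by positivity))
          (succ_pow_mul_rpow_mul_exp_le n N k) (by positivity) (by positivity)

theorem lintegral_dist_pow_mul_le_of_le_gaussian :
    ∫⁻ y, ENNReal.ofReal (dist x y ^ n * ρ y) ∂m ≤
      ENNReal.ofReal (C₁ * gaussianMomentConstant n N * t ^ ((n : ℝ) / 2)) := by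
  have h_sqrt_pow : √t ^ n = t ^ ((n : ℝ) / 2) := by
    rw [sqrt_eq_rpow, ← rpow_natCast, ← rpow_mul ht.le]
    ring_nf
  calc ∫⁻ y, ENNReal.ofReal (dist x y ^ n * ρ y) ∂m
      ≤ ∑' k : ℕ, ENNReal.ofReal (C₁ * √t ^ n *
          (((k : ℝ) + 1) ^ (n + ⌈N⌉₊) * exp (-1 / 5) ^ k)) :=
        (lintegral_le_tsum_setLIntegral_annulus (sqrt_pos.2 ht) _).trans
          (ENNReal.tsum_le_tsum
            (setLIntegral_annulus_dist_pow_mul_le n hC₁ ht hfin hdoubling hρ))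
    _ = ENNReal.ofReal (C₁ * gaussianMomentConstant n N * t ^ ((n : ℝ) / 2)) := by
        rw [← ENNReal.ofReal_tsum_of_nonneg (fun _ => by positivity)
          ((summable_gaussianMomentConstant n N).mul_left _), tsum_mul_left,
          gaussianMomentConstant, h_sqrt_pow]
        ring_nf

end GaussianMoment

theorem heat_kernel_moment_estimate_general
    (N : ℝ) (n : ℕ) (C₁ : ℝ) (hC₁ : 0 < C₁) :
    ∃ C : ℝ, 0 < C ∧
      ∀ (X : Type) [MetricSpace X] [MeasurableSpace X] [BorelSpace X]
        (m : Measure X) (x : X) (s : ℝ → ℝ),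
        Measurable s →
        (∀ u : ℝ, 0 ≤ s u) →
        (∀ r : ℝ, 0 < r → 0 < m (Metric.ball x r)) →
        (∀ r : ℝ, 0 < r →
          m (Metric.ball x r) = ENNReal.ofReal (∫ u in Set.Ioo (0:ℝ) r, s u)) →
        AntitoneOn (fun r : ℝ => s r / r ^ (N - 1)) (Set.Ioi (0:ℝ)) →
        ∀ t : ℝ, 0 < t → ∀ ρ : X → ℝ, Measurable ρ → (∀ y : X, 0 ≤ ρ y) →
          (∀ y : X, ρ y ≤ C₁ / (m (Metric.ball x (Real.sqrt t))).toReal *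
            Real.exp (-(dist x y) ^ 2 / (5 * t))) →
          ∫⁻ y, ENNReal.ofReal (dist x y ^ n * ρ y) ∂m ≤
            ENNReal.ofReal (C * t ^ ((n : ℝ) / 2)) := by
  refine ⟨C₁ * gaussianMomentConstant n N, mul_pos hC₁ (gaussianMomentConstant_pos n N), ?_⟩
  intro X _ _ _ m x s _ _ hpos hvol hs t ht ρ _ _ hρ
  have hsqrt : 0 < √t := sqrt_pos.2 ht
  refine lintegral_dist_pow_mul_le_of_le_gaussian n hC₁.le ht ?_ (fun c hc => ?_) hρ
  · rw [hvol _ hsqrt]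
    exact ENNReal.ofReal_ne_top
  · exact measure_ball_mul_le_rpow_mul hvol hs hsqrt hc (hpos _ (by positivity)).ne'

/-- Moment estimate for the heat kernel: under Bishop–Gromov type hypotheses
(`m(B_r(x)) = ∫₀^r s(u) du` with `s(r)/r^{N-1}` nonincreasing), for every `n ∈ ℕ`
and `C₁ > 0` there is a constant `C` depending only on `n`, `N`, `C₁` such that any
nonnegative `ρ` obeying the Gaussian bound
`ρ(y) ≤ C₁ m(B_{√t}(x))⁻¹ exp(−d(x,y)²/(5t))` satisfies
`∫ d(x,y)^n ρ(y) dm(y) ≤ C t^{n/2}`. -/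
theorem heat_kernel_moment_estimate
    (N : ℝ) (hN : 1 ≤ N) (n : ℕ) (C₁ : ℝ) (hC₁ : 0 < C₁) :
    ∃ C : ℝ, 0 < C ∧
      ∀ (X : Type) [MetricSpace X] [MeasurableSpace X] [BorelSpace X]
        (m : Measure X) (x : X) (s : ℝ → ℝ),
        Measurable s →
        (∀ u : ℝ, 0 ≤ s u) →
        (∀ r : ℝ, 0 < r → 0 < m (Metric.ball x r)) →
        (∀ r : ℝ, 0 < r →
          m (Metric.ball x r) = ENNReal.ofReal (∫ u in Set.Ioo (0:ℝ) r, s u)) →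
        AntitoneOn (fun r : ℝ => s r / r ^ (N - 1)) (Set.Ioi (0:ℝ)) →
        ∀ t : ℝ, 0 < t → ∀ ρ : X → ℝ, Measurable ρ → (∀ y : X, 0 ≤ ρ y) →
          (∀ y : X, ρ y ≤ C₁ / (m (Metric.ball x (Real.sqrt t))).toReal *
            Real.exp (-(dist x y) ^ 2 / (5 * t))) →
          ∫⁻ y, ENNReal.ofReal (dist x y ^ n * ρ y) ∂m ≤
            ENNReal.ofReal (C * t ^ ((n : ℝ) / 2)) :=
  heat_kernel_moment_estimate_general N n C₁ hC₁
end

section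
/- For every C₁>0 and every t>0 there exists a constant C, depending only on N, C₁ and t, such that every Borel function ρ:X→[0,∞) satisfying ρ(y) ≤ C₁·m(B_{√t}(x))⁻¹·exp(−d(x,y)²/(5t)) for all y∈X obeys ∫_X e^{d(x,y)} · ρ(y) dm(y) ≤ C. (This is the exponential integrability estimate for the heat kernel, showing the heat semigroup maps the weighted space DH(X)=L¹(X, e^{−d(·,x̄)}m) into itself.) -/
/-!
Cover `X` by the annuli `k √t ≤ d(x, y) < (k + 1) √t`. On the `k`-th annulus the Gaussian bound
gives `e^{d} ρ ≤ C₁ e^{5t/2} e^{-k²/10} / m(B_{√t}(x))`, while the Bishop–Gromov inequality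
`m(B_{cr}(x)) ≤ c^N m(B_r(x))` (`c ≥ 1`) bounds the measure of the annulus by
`(k + 1)^N m(B_{√t}(x))`. The factor `m(B_{√t}(x))` cancels, and `∑ (k + 1)^N e^{-k²/10}`
converges.
-/

open MeasureTheory Real Set

lemma summable_add_one_rpow_mul_exp_neg_mul_sq (N : ℝ) {a : ℝ} (ha : 0 < a) :
    Summable fun k : ℕ => ((k : ℝ) + 1) ^ N * exp (-a * k ^ 2) := by
  set M := ⌈N⌉₊
  have hshift : Summable fun k : ℕ => ((k : ℝ) + 1) ^ M * exp (-a * (k + 1)) := by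
    simpa using (summable_nat_add_iff 1).mpr (summable_pow_mul_exp_neg_nat_mul M ha)
  refine .of_nonneg_of_le (fun k => by positivity) (fun k => ?_) (hshift.mul_left (exp a))
  have hpow : ((k : ℝ) + 1) ^ N ≤ ((k : ℝ) + 1) ^ M := by
    rw [← rpow_natCast]
    exact rpow_le_rpow_of_exponent_le (by linarith [k.cast_nonneg (α := ℝ)]) (Nat.le_ceil N)
  have hexp : exp (-a * k ^ 2) ≤ exp a * exp (-a * (k + 1)) := by
    have hk : (k : ℝ) ≤ k ^ 2 := by exact_mod_cast Nat.le_self_pow two_ne_zero k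
    rw [← exp_add, exp_le_exp]
    nlinarith
  calc ((k : ℝ) + 1) ^ N * exp (-a * k ^ 2)
      ≤ ((k : ℝ) + 1) ^ M * (exp a * exp (-a * (k + 1))) := by gcongr
    _ = exp a * (((k : ℝ) + 1) ^ M * exp (-a * (k + 1))) := by ring

lemma exp_mul_exp_neg_sq_div_le {t d k : ℝ} (ht : 0 < t) (hk : 0 ≤ k) (hkd : k * √t ≤ d) :
    exp d * exp (-d ^ 2 / (5 * t)) ≤ exp (5 * t / 2) * exp (-(1 / 10) * k ^ 2) := by
  have hk2 : k ^ 2 * t ≤ d ^ 2 := by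
    calc k ^ 2 * t = (k * √t) ^ 2 := by rw [mul_pow, sq_sqrt ht.le]
      _ ≤ d ^ 2 := pow_le_pow_left₀ (by positivity) hkd 2
  rw [← exp_add, ← exp_add, exp_le_exp]
  -- `d ≤ 5t/2 + d²/(10t)` is AM–GM, and `k²/10 ≤ d²/(10t)`.
  have hamgm : d - d ^ 2 / (10 * t) ≤ 5 * t / 2 := by
    rw [sub_le_iff_le_add, ← sub_le_iff_le_add', le_div_iff₀ (by positivity)]
    nlinarith [sq_nonneg (d - 5 * t)]
  have hk2' : k ^ 2 / 10 ≤ d ^ 2 / (10 * t) := by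
    rw [div_le_div_iff₀ (by norm_num) (by positivity)]
    nlinarith
  have hsplit : -d ^ 2 / (5 * t) = -(d ^ 2 / (10 * t)) - d ^ 2 / (10 * t) := by
    field_simp
    ring
  linarith

lemma exp_mul_le_of_le_mul_exp_neg_sq_div {t d k C ρ : ℝ} (ht : 0 < t) (hk : 0 ≤ k)
    (hkd : k * √t ≤ d) (hC : 0 ≤ C) (hρ : ρ ≤ C * exp (-d ^ 2 / (5 * t))) :
    exp d * ρ ≤ C * exp (5 * t / 2) * exp (-(1 / 10) * k ^ 2) :=
  calc exp d * ρ ≤ C * (exp d * exp (-d ^ 2 / (5 * t))) := by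
        rw [mul_left_comm]; exact mul_le_mul_of_nonneg_left hρ (exp_pos d).le
    _ ≤ C * (exp (5 * t / 2) * exp (-(1 / 10) * k ^ 2)) :=
        mul_le_mul_of_nonneg_left (exp_mul_exp_neg_sq_div_le ht hk hkd) hC
    _ = C * exp (5 * t / 2) * exp (-(1 / 10) * k ^ 2) := (mul_assoc _ _ _).symm

lemma apply_mul_le_rpow_mul_of_antitoneOn {s : ℝ → ℝ} {N c u : ℝ}
    (hanti : AntitoneOn (fun r => s r / r ^ (N - 1)) (Ioi 0)) (hc : 1 ≤ c) (hu : 0 < u) :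
    s (c * u) ≤ c ^ (N - 1) * s u := by
  have hc0 : 0 < c := one_pos.trans_le hc
  have h : s (c * u) / (c * u) ^ (N - 1) ≤ s u / u ^ (N - 1) :=
    hanti hu (mul_pos hc0 hu : 0 < c * u) (le_mul_of_one_le_left hu.le hc)
  rwa [mul_rpow hc0.le hu.le, ← div_div, div_le_div_iff_of_pos_right (rpow_pos_of_pos hu _),
    div_le_iff₀' (rpow_pos_of_pos hc0 _)] at h

lemma integral_Ioo_mul_le_rpow_mul_of_antitoneOn {s : ℝ → ℝ} {N r c : ℝ} (hs : ∀ u, 0 ≤ s u)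
    (hanti : AntitoneOn (fun r => s r / r ^ (N - 1)) (Ioi 0)) (hr : 0 < r) (hc : 1 ≤ c) :
    ∫ u in Ioo 0 (c * r), s u ≤ c ^ N * ∫ u in Ioo 0 r, s u := by
  have hc0 : 0 < c := one_pos.trans_le hc
  by_cases hint : IntegrableOn s (Ioo 0 (c * r))
  swap
  · rw [integral_undef hint]
    exact mul_nonneg (rpow_nonneg hc0.le _) (setIntegral_nonneg measurableSet_Ioo fun u _ => hs u)
  have hscale : ∫ u in Ioo 0 (c * r), s u = c * ∫ u in Ioo 0 r, s (c * u) := by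
    have h := intervalIntegral.integral_comp_mul_left s hc0.ne' (a := 0) (b := r)
    rw [mul_zero, intervalIntegral.integral_of_le hr.le,
      intervalIntegral.integral_of_le (mul_pos hc0 hr).le, integral_Ioc_eq_integral_Ioo,
      integral_Ioc_eq_integral_Ioo] at h
    rw [h, smul_eq_mul, mul_inv_cancel_left₀ hc0.ne']
  have hcompare : ∫ u in Ioo 0 r, s (c * u) ≤ c ^ (N - 1) * ∫ u in Ioo 0 r, s u := by
    rw [← integral_const_mul]
    exact integral_mono_of_nonneg (ae_of_all _ fun u => hs _)
      ((hint.mono_set (Ioo_subset_Ioo_right (le_mul_of_one_le_left hr.le hc))).const_mul _)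
      (ae_restrict_of_forall_mem measurableSet_Ioo fun u hu =>
        apply_mul_le_rpow_mul_of_antitoneOn hanti hc hu.1)
  calc ∫ u in Ioo 0 (c * r), s u ≤ c * (c ^ (N - 1) * ∫ u in Ioo 0 r, s u) := by
        rw [hscale]; gcongr
    _ = c ^ N * ∫ u in Ioo 0 r, s u := by
        rw [rpow_sub_one hc0.ne']
        field_simp

section BishopGromov

variable {X : Type*} [PseudoMetricSpace X] [MeasurableSpace X] {m : Measure X} {x : X}
  {s : ℝ → ℝ} {N r c : ℝ}

lemma measure_ball_mul_le_rpow_mul_measure_ball (hs : ∀ u, 0 ≤ s u)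
    (hvol : ∀ r, 0 < r → m (Metric.ball x r) = ENNReal.ofReal (∫ u in Ioo 0 r, s u))
    (hanti : AntitoneOn (fun r => s r / r ^ (N - 1)) (Ioi 0)) (hr : 0 < r) (hc : 1 ≤ c) :
    m (Metric.ball x (c * r)) ≤ ENNReal.ofReal (c ^ N) * m (Metric.ball x r) := by
  rw [hvol _ (mul_pos (one_pos.trans_le hc) hr), hvol r hr,
    ← ENNReal.ofReal_mul (rpow_nonneg (zero_le_one.trans hc) _)]
  exact ENNReal.ofReal_le_ofReal (integral_Ioo_mul_le_rpow_mul_of_antitoneOn hs hanti hr hc)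

lemma ofReal_div_toReal_mul_measure_ball_mul_le {a : ℝ} (hs : ∀ u, 0 ≤ s u)
    (hvol : ∀ r, 0 < r → m (Metric.ball x r) = ENNReal.ofReal (∫ u in Ioo 0 r, s u))
    (hanti : AntitoneOn (fun r => s r / r ^ (N - 1)) (Ioi 0)) (hpos : 0 < m (Metric.ball x r))
    (hr : 0 < r) (hc : 1 ≤ c) (ha : 0 ≤ a) :
    ENNReal.ofReal (a / (m (Metric.ball x r)).toReal) * m (Metric.ball x (c * r)) ≤
      ENNReal.ofReal (c ^ N * a) := by
  have htop : m (Metric.ball x r) ≠ ⊤ := by rw [hvol r hr]; exact ENNReal.ofReal_ne_top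
  have hball := measure_ball_mul_le_rpow_mul_measure_ball hs hvol hanti hr hc
  rw [← ENNReal.ofReal_toReal htop, ← ENNReal.ofReal_mul (rpow_nonneg (zero_le_one.trans hc) _)]
    at hball
  refine (mul_le_mul_right hball _).trans_eq ?_
  rw [← ENNReal.ofReal_mul (by positivity)]
  congr 1
  field_simp [(ENNReal.toReal_pos hpos.ne' htop).ne']

end BishopGromov

lemma lintegral_le_tsum_mul_measure_ball {X : Type*} [PseudoMetricSpace X] [MeasurableSpace X]
    [OpensMeasurableSpace X] (m : Measure X) (x : X) {r : ℝ} (hr : 0 < r)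
    {f : X → ENNReal} {b : ℕ → ENNReal} (hf : ∀ (k : ℕ) y, k * r ≤ dist x y → f y ≤ b k) :
    ∫⁻ y, f y ∂m ≤ ∑' k : ℕ, b k * m (Metric.ball x ((k + 1) * r)) := by
  set A : ℕ → Set X := fun k => {y | k * r ≤ dist x y} ∩ Metric.ball x ((k + 1) * r)
  have hA : ∀ k, MeasurableSet (A k) := fun k =>
    (isClosed_le continuous_const (continuous_const.dist continuous_id)).measurableSet.inter
      measurableSet_ball
  have hcover : ⋃ k, A k = univ := by
    refine eq_univ_of_forall fun y => mem_iUnion.mpr ⟨⌊dist x y / r⌋₊, ?_, ?_⟩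
    · exact (le_div_iff₀ hr).mp (Nat.floor_le (by positivity))
    · rw [Metric.mem_ball, dist_comm, ← div_lt_iff₀ hr]
      exact Nat.lt_floor_add_one _
  calc ∫⁻ y, f y ∂m = ∫⁻ y in ⋃ k, A k, f y ∂m := by rw [hcover, Measure.restrict_univ]
    _ ≤ ∑' k, ∫⁻ y in A k, f y ∂m := lintegral_iUnion_le A f
    _ ≤ ∑' k, b k * m (A k) := ENNReal.tsum_le_tsum fun k =>
        (setLIntegral_mono' (hA k) fun y hy => hf k y hy.1).trans_eq (setLIntegral_const _ _)
    _ ≤ ∑' k, b k * m (Metric.ball x ((k + 1) * r)) := ENNReal.tsum_le_tsum fun k =>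
        mul_le_mul_right (measure_mono inter_subset_right) _

theorem heat_kernel_exponential_estimate_general
    (N : ℝ) (C₁ : ℝ) (hC₁ : 0 < C₁) (t : ℝ) (ht : 0 < t) :
    ∃ C : ℝ, 0 < C ∧
      ∀ (X : Type) [MetricSpace X] [MeasurableSpace X] [BorelSpace X]
        (m : Measure X) (x : X) (s : ℝ → ℝ),
        Measurable s →
        (∀ u : ℝ, 0 ≤ s u) →
        (∀ r : ℝ, 0 < r → 0 < m (Metric.ball x r)) →
        (∀ r : ℝ, 0 < r →
          m (Metric.ball x r) = ENNReal.ofReal (∫ u in Set.Ioo (0:ℝ) r, s u)) →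
        AntitoneOn (fun r : ℝ => s r / r ^ (N - 1)) (Set.Ioi (0:ℝ)) →
        ∀ ρ : X → ℝ, Measurable ρ → (∀ y : X, 0 ≤ ρ y) →
          (∀ y : X, ρ y ≤ C₁ / (m (Metric.ball x (Real.sqrt t))).toReal *
            Real.exp (-(dist x y) ^ 2 / (5 * t))) →
          ∫⁻ y, ENNReal.ofReal (Real.exp (dist x y) * ρ y) ∂m ≤ ENNReal.ofReal C := by
  set g : ℕ → ℝ := fun k => ((k : ℝ) + 1) ^ N * exp (-(1 / 10) * k ^ 2)
  have hg : Summable g := summable_add_one_rpow_mul_exp_neg_mul_sq N (by norm_num)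
  have hg0 : ∀ k, 0 ≤ g k := fun k => by positivity
  refine ⟨C₁ * exp (5 * t / 2) * ∑' k, g k,
    mul_pos (by positivity) (hg.tsum_pos hg0 0 (by positivity)), ?_⟩
  intro X _ _ _ m x s _ hs hpos hvol hanti ρ _ _ hρ
  have hsqrt : 0 < √t := sqrt_pos.mpr ht
  calc ∫⁻ y, ENNReal.ofReal (exp (dist x y) * ρ y) ∂m
      ≤ ∑' k : ℕ, ENNReal.ofReal (C₁ * exp (5 * t / 2) * exp (-(1 / 10) * k ^ 2) /
          (m (Metric.ball x √t)).toReal) * m (Metric.ball x ((k + 1) * √t)) :=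
        lintegral_le_tsum_mul_measure_ball m x hsqrt fun k y hk => ENNReal.ofReal_le_ofReal <|
          (exp_mul_le_of_le_mul_exp_neg_sq_div ht k.cast_nonneg hk (by positivity) (hρ y)).trans_eq
            (by ring)
    _ ≤ ∑' k : ℕ, ENNReal.ofReal (((k : ℝ) + 1) ^ N * (C₁ * exp (5 * t / 2) *
          exp (-(1 / 10) * k ^ 2))) :=
        ENNReal.tsum_le_tsum fun k => ofReal_div_toReal_mul_measure_ball_mul_le hs hvol hanti
          (hpos _ hsqrt) hsqrt (by simp) (by positivity)
    _ = ENNReal.ofReal (C₁ * exp (5 * t / 2) * ∑' k, g k) := by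
        rw [← tsum_mul_left, ENNReal.ofReal_tsum_of_nonneg (fun k => by positivity)
          (hg.mul_left _)]
        exact tsum_congr fun k => congrArg ENNReal.ofReal (by ring)

/-- Exponential integrability estimate for the heat kernel: under Bishop–Gromov type
hypotheses (`m(B_r(x)) = ∫₀^r s(u) du` with `s(r)/r^{N-1}` nonincreasing), for every
`C₁ > 0` and `t > 0` there is a constant `C` depending only on `N`, `C₁`, `t` such
that any nonnegative `ρ` obeying the Gaussian bound
`ρ(y) ≤ C₁ m(B_{√t}(x))⁻¹ exp(−d(x,y)²/(5t))` satisfies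
`∫ e^{d(x,y)} ρ(y) dm(y) ≤ C`. -/
theorem heat_kernel_exponential_estimate
    (N : ℝ) (hN : 1 ≤ N) (C₁ : ℝ) (hC₁ : 0 < C₁) (t : ℝ) (ht : 0 < t) :
    ∃ C : ℝ, 0 < C ∧
      ∀ (X : Type) [MetricSpace X] [MeasurableSpace X] [BorelSpace X]
        (m : Measure X) (x : X) (s : ℝ → ℝ),
        Measurable s →
        (∀ u : ℝ, 0 ≤ s u) →
        (∀ r : ℝ, 0 < r → 0 < m (Metric.ball x r)) →
        (∀ r : ℝ, 0 < r →
          m (Metric.ball x r) = ENNReal.ofReal (∫ u in Set.Ioo (0:ℝ) r, s u)) →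
        AntitoneOn (fun r : ℝ => s r / r ^ (N - 1)) (Set.Ioi (0:ℝ)) →
        ∀ ρ : X → ℝ, Measurable ρ → (∀ y : X, 0 ≤ ρ y) →
          (∀ y : X, ρ y ≤ C₁ / (m (Metric.ball x (Real.sqrt t))).toReal *
            Real.exp (-(dist x y) ^ 2 / (5 * t))) →
          ∫⁻ y, ENNReal.ofReal (Real.exp (dist x y) * ρ y) ∂m ≤ ENNReal.ofReal C :=
  heat_kernel_exponential_estimate_general N C₁ hC₁ t ht
end

section
/- Let X be a Polish space and let x↦μ_x be a Borel measurable assignment of Borel probability measures on X, i.e. x↦μ_x(E) is Borel measurable for every Borel set E⊆X (a Markov kernel from X to X). Then there exists a Borel measurable map T:X→X such that T(x)∈supp(μ_x) for every x∈X. -/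
/-!
The support map `x ↦ supp (μ x)` is closed- and nonempty-valued, and it is lower measurable:
for open `U`, `supp (μ x)` meets `U` iff `0 < μ x U`. The Kuratowski–Ryll-Nardzewski argument
then selects a Borel point of it. Fixing a complete metric and a dense sequence `d`, choose
inductively the least index `n_k` such that `F x` meets `ball (d n_k) 2⁻ᵏ` and this ball meets
the previous one inside `F x`. Each `x ↦ n_k x` is measurable since it is the least index
satisfying a measurable condition, `d (n_k x)` is Cauchy with geometric rate, and its limit lies
at distance `0` from the closed set `F x`.
-/

open MeasureTheory Metric Set Filter Topology

namespace KuratowskiRyllNardzewski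

variable {X Y : Type*} [MetricSpace Y] {F : X → Set Y} {d : ℕ → Y}

theorem exists_inter_ball_nonempty (hd : DenseRange d) {s : Set Y} (hs : s.Nonempty) {r : ℝ}
    (hr : 0 < r) : ∃ n, (s ∩ ball (d n) r).Nonempty := by
  obtain ⟨y, hy⟩ := hs
  obtain ⟨n, hn⟩ := denseRange_iff.1 hd y r hr
  exact ⟨n, y, hy, mem_ball.2 hn⟩

-- Phrased as an implication so that an index exists for every `c`, which keeps `selIndex`
-- a plain recursion on `ℕ → X → ℕ`.
theorem exists_refining_index (F : X → Set Y) (hd : DenseRange d) (k c : ℕ) (x : X) :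
    ∃ n, (F x ∩ ball (d c) ((1 / 2 : ℝ) ^ k)).Nonempty →
      (F x ∩ (ball (d c) ((1 / 2 : ℝ) ^ k) ∩ ball (d n) ((1 / 2 : ℝ) ^ (k + 1)))).Nonempty := by
  by_cases h : (F x ∩ ball (d c) ((1 / 2 : ℝ) ^ k)).Nonempty
  · obtain ⟨n, hn⟩ := exists_inter_ball_nonempty hd h (r := (1 / 2) ^ (k + 1)) (by positivity)
    exact ⟨n, fun _ => by rwa [← inter_assoc]⟩
  · exact ⟨0, fun h' => absurd h' h⟩

open scoped Classical

noncomputable def selIndex (hd : DenseRange d) (hne : ∀ x, (F x).Nonempty) : ℕ → X → ℕ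
  | 0, x => Nat.find (exists_inter_ball_nonempty hd (hne x) one_pos)
  | k + 1, x => Nat.find (exists_refining_index F hd k (selIndex hd hne k x) x)

variable (hd : DenseRange d) (hne : ∀ x, (F x).Nonempty)

theorem selIndex_inter_ball_nonempty (k : ℕ) (x : X) :
    (F x ∩ ball (d (selIndex hd hne k x)) ((1 / 2 : ℝ) ^ k)).Nonempty := by
  induction k with
  | zero => simpa [selIndex] using Nat.find_spec (exists_inter_ball_nonempty hd (hne x) one_pos)
  | succ k ih =>
    obtain ⟨y, hyF, -, hy⟩ :=
      Nat.find_spec (exists_refining_index F hd k (selIndex hd hne k x) x) ih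
    exact ⟨y, hyF, hy⟩

theorem dist_selIndex_succ_le (k : ℕ) (x : X) :
    dist (d (selIndex hd hne k x)) (d (selIndex hd hne (k + 1) x)) ≤ 2 * (1 / 2 : ℝ) ^ k := by
  obtain ⟨y, -, hyk, hyk'⟩ := Nat.find_spec
    (exists_refining_index F hd k (selIndex hd hne k x) x) (selIndex_inter_ball_nonempty hd hne k x)
  have hk := mem_ball'.1 hyk
  have hk' : dist y (d (selIndex hd hne (k + 1) x)) < (1 / 2) ^ (k + 1) := hyk'
  have hr : (1 / 2 : ℝ) ^ (k + 1) ≤ (1 / 2) ^ k :=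
    pow_le_pow_of_le_one (by norm_num) (by norm_num) k.le_succ
  linarith [dist_triangle (d (selIndex hd hne k x)) y (d (selIndex hd hne (k + 1) x))]

theorem cauchySeq_selIndex (x : X) : CauchySeq fun k => d (selIndex hd hne k x) :=
  cauchySeq_of_le_geometric (1 / 2) 2 (by norm_num) (dist_selIndex_succ_le hd hne · x)

theorem measurable_selIndex [MeasurableSpace X]
    (hF : ∀ U, IsOpen U → MeasurableSet {x | (F x ∩ U).Nonempty}) (k : ℕ) :
    Measurable (selIndex hd hne k) := by
  induction k with
  | zero =>
    exact measurable_find (fun x => exists_inter_ball_nonempty hd (hne x) one_pos)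
      fun n => hF _ isOpen_ball
  | succ k ih =>
    have hstep : Measurable fun p : X × ℕ => Nat.find (exists_refining_index F hd k p.2 p.1) :=
      measurable_from_prod_countable_left fun c =>
        measurable_find (fun x => exists_refining_index F hd k c x) fun n =>
          (hF _ isOpen_ball).imp (hF _ (isOpen_ball.inter isOpen_ball))
    exact hstep.comp (measurable_id.prodMk ih)

variable [CompleteSpace Y] [Nonempty Y]

noncomputable def selection (x : X) : Y := limUnder atTop fun k => d (selIndex hd hne k x)

theorem tendsto_selection (x : X) :
    Tendsto (fun k => d (selIndex hd hne k x)) atTop (𝓝 (selection hd hne x)) :=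
  (cauchySeq_selIndex hd hne x).tendsto_limUnder

theorem selection_mem (hclosed : ∀ x, IsClosed (F x)) (x : X) : selection hd hne x ∈ F x := by
  refine ((hclosed x).mem_iff_infDist_zero (hne x)).2 (tendsto_nhds_unique
    (((continuous_infDist_pt (F x)).tendsto _).comp (tendsto_selection hd hne x)) ?_)
  refine squeeze_zero (fun _ => infDist_nonneg) (fun k => ?_)
    (tendsto_pow_atTop_nhds_zero_of_lt_one (by norm_num : (0 : ℝ) ≤ 1 / 2) (by norm_num))
  obtain ⟨y, hyF, hy⟩ := selIndex_inter_ball_nonempty hd hne k x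
  exact (infDist_le_dist_of_mem hyF).trans (mem_ball'.1 hy).le

theorem measurable_selection [MeasurableSpace X] [MeasurableSpace Y] [BorelSpace Y]
    (hF : ∀ U, IsOpen U → MeasurableSet {x | (F x ∩ U).Nonempty}) :
    Measurable (selection hd hne) :=
  measurable_of_tendsto_metrizable' atTop
    (fun k => measurable_from_nat.comp (measurable_selIndex hd hne hF k))
    (tendsto_pi_nhds.2 (tendsto_selection hd hne))

end KuratowskiRyllNardzewski

theorem exists_measurable_selection_of_isClosed {X Y : Type*} [MeasurableSpace X]
    [TopologicalSpace Y] [PolishSpace Y] [MeasurableSpace Y] [BorelSpace Y] {F : X → Set Y}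
    (hclosed : ∀ x, IsClosed (F x)) (hne : ∀ x, (F x).Nonempty)
    (hF : ∀ U, IsOpen U → MeasurableSet {x | (F x ∩ U).Nonempty}) :
    ∃ f : X → Y, Measurable f ∧ ∀ x, f x ∈ F x := by
  rcases isEmpty_or_nonempty Y with hY | hY
  · exact ⟨fun x => (hne x).some, measurable_of_empty_codomain _, fun x => (hne x).some_mem⟩
  let _ := TopologicalSpace.upgradeIsCompletelyMetrizable Y
  have hd := TopologicalSpace.denseRange_denseSeq Y
  exact ⟨_, KuratowskiRyllNardzewski.measurable_selection hd hne hF,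
    KuratowskiRyllNardzewski.selection_mem hd hne hclosed⟩

theorem MeasureTheory.Measure.inter_support_nonempty_iff {X : Type*} [TopologicalSpace X]
    [HereditarilyLindelofSpace X] [MeasurableSpace X] {μ : Measure X} {U : Set X}
    (hU : IsOpen U) : (U ∩ μ.support).Nonempty ↔ 0 < μ U :=
  ⟨fun ⟨_, hyU, hy⟩ => (mem_support_iff_forall _).1 hy U (hU.mem_nhds hyU),
    nonempty_inter_support_of_pos⟩

/-- Borel selection (variant of Kuratowski–Ryll-Nardzewski): given a Borel measurable
assignment `x ↦ μ x` of Borel probability measures on a Polish space `X` (a Markov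
kernel), there is a Borel map `T : X → X` with `T x ∈ supp (μ x)` for every `x`,
where `y ∈ supp μ` means every open set containing `y` has positive `μ`-measure. -/
theorem borel_selection_in_support
    {X : Type*} [TopologicalSpace X] [PolishSpace X]
    [MeasurableSpace X] [BorelSpace X]
    (μ : X → Measure X)
    (hprob : ∀ x : X, IsProbabilityMeasure (μ x))
    (hmeas : ∀ E : Set X, MeasurableSet E → Measurable fun x => μ x E) :
    ∃ T : X → X, Measurable T ∧
      ∀ x : X, ∀ U : Set X, IsOpen U → T x ∈ U → 0 < μ x U := by
  have hlower : ∀ U, IsOpen U → MeasurableSet {x | ((μ x).support ∩ U).Nonempty} := by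
    intro U hU
    simp_rw [inter_comm _ U, Measure.inter_support_nonempty_iff hU]
    exact hmeas U hU.measurableSet measurableSet_Ioi
  obtain ⟨T, hT, hTsupp⟩ := exists_measurable_selection_of_isClosed
    (fun _ => Measure.isClosed_support)
    (fun x => Measure.nonempty_support (hprob x).ne_zero) hlower
  exact ⟨T, hT, fun x U hU hTU =>
    (Measure.inter_support_nonempty_iff hU).1 ⟨T x, hTU, hTsupp x⟩⟩
end

section
/- Let (X',d') be a geodesic metric space containing at least two points, and endow the product X'×ℝ with the distance ((x',t),(y',s)) ↦ √(d'(x',y')² + |t−s|²). Then the Hausdorff dimension of X'×ℝ is at least 2. -/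
open MeasureTheory Set

/-! The map `(x, t) ↦ (d'(a, x), t)` is Lipschitz, and along a geodesic from `a` to `b` its
first coordinate sweeps out `[0, d'(a, b)]`. Its image therefore contains the open strip
`(0, d'(a, b)) × ℝ` of the plane, which has Hausdorff dimension `2`, and Lipschitz maps do not
increase Hausdorff dimension. The `ℓ²` product metric dominates the max metric, so it suffices
to work with the latter. -/

lemma Icc_subset_range_dist_of_geodesic {X : Type*} [PseudoMetricSpace X] {a b : X}
    {γ : ℝ → X} (hγ0 : γ 0 = a)
    (hγ : ∀ s ∈ Icc (0 : ℝ) 1, ∀ t ∈ Icc (0 : ℝ) 1, dist (γ s) (γ t) = |s - t| * dist a b) :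
    Icc 0 (dist a b) ⊆ range (dist a) := by
  intro r ⟨hr0, hrc⟩
  rcases hr0.eq_or_lt with rfl | hr_pos
  · exact ⟨a, dist_self a⟩
  have hc : 0 < dist a b := hr_pos.trans_le hrc
  have hs : r / dist a b ∈ Icc (0 : ℝ) 1 := ⟨by positivity, (div_le_one hc).2 hrc⟩
  have h := hγ 0 ⟨le_rfl, zero_le_one⟩ _ hs
  rw [hγ0, zero_sub, abs_neg, abs_of_nonneg hs.1, div_mul_cancel₀ r hc.ne'] at h
  exact ⟨γ (r / dist a b), h⟩

lemma LipschitzWith.two_le_dimH_univ_prod_real {X : Type*} [EMetricSpace X] {K : NNReal}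
    {f : X → ℝ} (hf : LipschitzWith K f) (hrange : (interior (range f)).Nonempty) :
    2 ≤ dimH (univ : Set (X × ℝ)) := by
  have hF : LipschitzWith (max (K * 1) 1) (Prod.map f id) :=
    (hf.comp (LipschitzWith.prod_fst (β := ℝ))).prodMk LipschitzWith.prod_snd
  calc (2 : ENNReal) = dimH (range (Prod.map f id)) := by
        rw [range_prodMap, range_id, Real.dimH_of_nonempty_interior]
        · simp [Module.finrank_prod]
        · rw [interior_prod_eq, interior_univ]
          exact hrange.prod univ_nonempty
    _ ≤ dimH (univ : Set (X × ℝ)) := hF.dimH_range_le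

/-- If `(X', d')` is a geodesic metric space with at least two points, then the product
`X' × ℝ`, endowed with the distance
`((x',t),(y',s)) ↦ √(d'(x',y')² + |t−s|²)` (the `ℓ²`-product metric, i.e. `WithLp 2`),
has Hausdorff dimension at least `2`. -/
theorem product_with_line_dimH_ge_two
    {X' : Type*} [MetricSpace X']
    (hgeo : ∀ x y : X', ∃ γ : ℝ → X', γ 0 = x ∧ γ 1 = y ∧
      ∀ s ∈ Set.Icc (0:ℝ) 1, ∀ t ∈ Set.Icc (0:ℝ) 1,
        dist (γ s) (γ t) = |s - t| * dist x y)
    (hpts : ∃ a b : X', a ≠ b) :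
    2 ≤ dimH (Set.univ : Set (WithLp 2 (X' × ℝ))) := by
  obtain ⟨a, b, hab⟩ := hpts
  obtain ⟨γ, hγ0, -, hγ⟩ := hgeo a b
  have hstrip : Ioo 0 (dist a b) ⊆ interior (range (dist a)) := by
    simpa only [interior_Icc] using interior_mono (Icc_subset_range_dist_of_geodesic hγ0 hγ)
  have hprod : 2 ≤ dimH (univ : Set (X' × ℝ)) :=
    (LipschitzWith.dist_right a).two_le_dimH_univ_prod_real
      ((nonempty_Ioo.2 (dist_pos.2 hab)).mono hstrip)
  calc (2 : ENNReal) ≤ dimH (univ : Set (X' × ℝ)) := hprod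
    _ = dimH (range (WithLp.ofLp : WithLp 2 (X' × ℝ) → X' × ℝ)) := by
        rw [(WithLp.ofLp_surjective 2).range_eq]
    _ ≤ dimH (univ : Set (WithLp 2 (X' × ℝ))) :=
        (WithLp.prod_lipschitzWith_ofLp 2 X' ℝ).dimH_range_le
end
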